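/- arXiv:1506.04630 — 7 statements merged into one kernel-verified Lean document; each statement's English description precedes it below -/
import Mathlib

section
/- Let γ : ℝ → ℂ be smooth (C^∞) and 2π-periodic, with Fourier coefficients aₙ = (1/2π)∫₀^{2π} γ(θ)e^{-inθ} dθ for n ∈ ℤ. Let 0 < r₁ < 1 < r₂ and let A = {z ∈ ℂ : r₁ < |z| < r₂}. Then the following are equivalent: (a) there exists a function g : ℂ → ℂ that is complex differentiable (holomorphic) on A and satisfies g(e^{iθ}) = γ(θ) for all θ ∈ ℝ; (b) for every z ∈ A, both series Σ_{n≥0} aₙ zⁿ and Σ_{n≥1} a₋ₙ z^{−n} converge. -/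
/-!
The Fourier coefficients `aₙ` of `γ` are the Laurent coefficients `(2πi)⁻¹ ∮ z⁻ⁿ⁻¹ g(z) dz` of
any holomorphic extension `g`, computed on the unit circle. By Cauchy's theorem they may be
computed on any circle `|z| = ρ` in the annulus, and the Cauchy estimate bounds `|aₙ| ρⁿ`
uniformly in `n ∈ ℤ`. Convergence of both series at `z = ρ` bounds the same quantity, so both
conditions amount to: `|aₙ| ρⁿ` is bounded for every `ρ ∈ (r₁, r₂)`. Under this bound the Laurent
series `∑ aₙ zⁿ` converges locally uniformly on the annulus, hence is holomorphic there, and on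
the unit circle it is the Fourier series of `γ`, which converges to `γ` since its coefficients are
absolutely summable and `γ` is continuous.
-/

open Real Filter Set Metric Complex Topology

noncomputable def laurentCoeff (g : ℂ → ℂ) (ρ : ℝ) (n : ℤ) : ℂ :=
  (2 * π * I)⁻¹ * ∮ z in C(0, ρ), z ^ (-n - 1) * g z

theorem circleIntegral_eq_of_differentiableOn_annulus {E : Type*} [NormedAddCommGroup E]
    [NormedSpace ℂ E] {f : ℂ → E} {r₁ r₂ ρ ρ' : ℝ} (hr₁ : 0 ≤ r₁)
    (hf : DifferentiableOn ℂ f {z | ‖z‖ ∈ Ioo r₁ r₂}) (hρ : ρ ∈ Ioo r₁ r₂)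
    (hρ' : ρ' ∈ Ioo r₁ r₂) : ∮ z in C(0, ρ), f z = ∮ z in C(0, ρ'), f z := by
  wlog hle : ρ ≤ ρ' generalizing ρ ρ'
  · exact (this hρ' hρ (le_of_not_ge hle)).symm
  have hA : IsOpen {z : ℂ | ‖z‖ ∈ Ioo r₁ r₂} := isOpen_Ioo.preimage continuous_norm
  have hsub : closedBall (0 : ℂ) ρ' \ ball 0 ρ ⊆ {z | ‖z‖ ∈ Ioo r₁ r₂} := by
    rintro z ⟨hz, hz'⟩
    rw [mem_closedBall_zero_iff] at hz
    rw [mem_ball_zero_iff, not_lt] at hz'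
    exact ⟨hρ.1.trans_le hz', hz.trans_lt hρ'.2⟩
  refine (circleIntegral_eq_of_differentiable_on_annulus_off_countable (hr₁.trans_lt hρ.1) hle
    countable_empty (hf.continuousOn.mono hsub) fun z hz => ?_).symm
  exact hf.differentiableAt (hA.mem_nhds
    (hsub ⟨ball_subset_closedBall hz.1.1, fun h => hz.1.2 (ball_subset_closedBall h)⟩))

theorem norm_laurentCoeff_mul_zpow_le {g : ℂ → ℂ} {ρ M : ℝ} (hρ : 0 < ρ)
    (hM : ∀ z ∈ sphere (0 : ℂ) ρ, ‖g z‖ ≤ M) (n : ℤ) : ‖laurentCoeff g ρ n‖ * ρ ^ n ≤ M := by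
  have hint : ‖∮ z in C(0, ρ), z ^ (-n - 1) * g z‖ ≤ 2 * π * ρ * (ρ ^ (-n - 1) * M) := by
    refine circleIntegral.norm_integral_le_of_norm_le_const hρ.le fun z hz => ?_
    rw [mem_sphere_zero_iff_norm] at hz
    rw [norm_mul, norm_zpow, hz]
    exact mul_le_mul_of_nonneg_left (hM z (mem_sphere_zero_iff_norm.2 hz)) (by positivity)
  have hρn : ρ * ρ ^ (-n - 1) * ρ ^ n = 1 := by
    rw [← zpow_one_add₀ hρ.ne', ← zpow_add₀ hρ.ne']
    simp
  have hnorm : ‖(2 * π * I)⁻¹‖ = (2 * π)⁻¹ := by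
    simp [abs_of_pos pi_pos]
  calc ‖laurentCoeff g ρ n‖ * ρ ^ n
      = (2 * π)⁻¹ * ‖∮ z in C(0, ρ), z ^ (-n - 1) * g z‖ * ρ ^ n := by
        rw [laurentCoeff, norm_mul, hnorm]
    _ ≤ (2 * π)⁻¹ * (2 * π * ρ * (ρ ^ (-n - 1) * M)) * ρ ^ n := by gcongr
    _ = M := by
        field_simp
        linear_combination M * hρn

theorem bddAbove_norm_laurentCoeff_mul_zpow {g : ℂ → ℂ} {r₁ r₂ ρ₀ ρ : ℝ} (hr₁ : 0 ≤ r₁)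
    (hg : DifferentiableOn ℂ g {z | ‖z‖ ∈ Ioo r₁ r₂}) (hρ₀ : ρ₀ ∈ Ioo r₁ r₂)
    (hρ : ρ ∈ Ioo r₁ r₂) : BddAbove (range fun n : ℤ => ‖laurentCoeff g ρ₀ n‖ * ρ ^ n) := by
  have hρ0 : 0 < ρ := hr₁.trans_lt hρ.1
  have hsphere : sphere (0 : ℂ) ρ ⊆ {z | ‖z‖ ∈ Ioo r₁ r₂} := fun z hz => by
    simpa [mem_sphere_zero_iff_norm.1 hz] using hρ
  obtain ⟨M, hM⟩ := (isCompact_sphere (0 : ℂ) ρ).exists_bound_of_continuousOn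
    (hg.continuousOn.mono hsphere)
  refine ⟨M, forall_mem_range.2 fun n => ?_⟩
  have hf : DifferentiableOn ℂ (fun z => z ^ (-n - 1) * g z) {z | ‖z‖ ∈ Ioo r₁ r₂} :=
    (differentiableOn_zpow _ _ (.inl fun h => hr₁.not_gt (by simpa using h.1))).mul hg
  rw [laurentCoeff, circleIntegral_eq_of_differentiableOn_annulus hr₁ hf hρ₀ hρ]
  exact norm_laurentCoeff_mul_zpow_le hρ0 hM n

theorem laurentCoeff_one_eq (g : ℂ → ℂ) (n : ℤ) :
    laurentCoeff g 1 n = (2 * (π : ℂ))⁻¹ *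
      ∫ θ in (0:ℝ)..(2 * π), g (exp (θ * I)) * exp (-(n : ℂ) * θ * I) := by
  have hintegrand : ∀ θ : ℝ, deriv (circleMap 0 1) θ • (circleMap 0 1 θ ^ (-n - 1) *
      g (circleMap 0 1 θ)) = I * (g (exp (θ * I)) * exp (-(n : ℂ) * θ * I)) := by
    intro θ
    rw [deriv_circleMap, circleMap_zero, ofReal_one, one_mul, smul_eq_mul, ← exp_int_mul]
    have : exp (θ * I) * exp (((-n - 1 : ℤ) : ℂ) * (θ * I)) = exp (-(n : ℂ) * θ * I) := by
      rw [← Complex.exp_add]; push_cast; ring_nf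
    linear_combination (I * g (exp (θ * I))) * this
  rw [laurentCoeff, circleIntegral]
  simp_rw [hintegrand]
  rw [intervalIntegral.integral_const_mul, ← mul_assoc]
  congr 1
  field_simp

theorem fourier_coe_two_pi_apply (n : ℤ) (x : ℝ) :
    fourier n (x : AddCircle (2 * π)) = exp (n * x * I) := by
  rw [fourier_coe_apply]
  congr 1
  push_cast
  field_simp

theorem hasSum_mul_exp_zpow_of_summable {γ : ℝ → ℂ} (hγ : Continuous γ)
    (hper : Function.Periodic γ (2 * π)) {a : ℤ → ℂ}
    (ha : ∀ n : ℤ, a n = (2 * (π : ℂ))⁻¹ *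
      ∫ θ in (0:ℝ)..(2 * π), γ θ * exp (-(n : ℂ) * θ * I))
    (hsum : Summable a) (θ : ℝ) : HasSum (fun n : ℤ => a n * exp (θ * I) ^ n) (γ θ) := by
  have : Fact (0 < 2 * π) := ⟨two_pi_pos⟩
  let F : C(AddCircle (2 * π), ℂ) :=
    ⟨hper.lift, isQuotientMap_quotient_mk'.continuous_iff.2 hγ⟩
  have hF : ∀ x : ℝ, F x = γ x := hper.lift_coe
  have hcoeff : fourierCoeff F = a := by
    ext n
    rw [fourierCoeff_eq_intervalIntegral _ n 0, ha, zero_add, one_div, Complex.real_smul]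
    push_cast
    congr 1
    refine intervalIntegral.integral_congr fun x _ => ?_
    simp only [hF, fourier_coe_two_pi_apply, smul_eq_mul, mul_comm (γ x)]
    push_cast
    ring_nf
  have h := has_pointwise_sum_fourier_series_of_summable (hcoeff ▸ hsum) (θ : AddCircle (2 * π))
  rw [hF] at h
  convert h using 2 with n
  rw [hcoeff, fourier_coe_two_pi_apply, smul_eq_mul, ← exp_int_mul, mul_assoc]

theorem summable_mul_pow_of_bddAbove {b : ℕ → ℝ} {r R : ℝ} (hb : ∀ n, 0 ≤ b n)
    (hbdd : BddAbove (range fun n => b n * R ^ n)) (hr : 0 ≤ r) (hrR : r < R) :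
    Summable fun n => b n * r ^ n := by
  obtain ⟨M, hM⟩ := hbdd
  have hR : 0 < R := hr.trans_lt hrR
  refine .of_nonneg_of_le (fun n => by have := hb n; positivity) (fun n => ?_)
    ((summable_geometric_of_lt_one (div_nonneg hr hR.le) ((div_lt_one hR).2 hrR)).mul_left M)
  calc b n * r ^ n = b n * R ^ n * (r / R) ^ n := by rw [div_pow]; field_simp
    _ ≤ M * (r / R) ^ n := mul_le_mul_of_nonneg_right (hM ⟨n, rfl⟩) (by positivity)

theorem summable_norm_mul_zpow {a : ℤ → ℂ} {r₁ r₂ ρ : ℝ} (hr₁ : 0 ≤ r₁)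
    (ha : ∀ ρ ∈ Ioo r₁ r₂, BddAbove (range fun n : ℤ => ‖a n‖ * ρ ^ n)) (hρ : ρ ∈ Ioo r₁ r₂) :
    Summable fun n : ℤ => ‖a n‖ * ρ ^ n := by
  obtain ⟨ρ₁, hρ₁, hρ₁ρ⟩ := exists_between hρ.1
  obtain ⟨ρ₂, hρρ₂, hρ₂⟩ := exists_between hρ.2
  have hρ₁0 : 0 < ρ₁ := hr₁.trans_lt hρ₁
  have hρ0 : 0 < ρ := hρ₁0.trans hρ₁ρ
  refine .of_nat_of_neg ?_ ?_
  · simp only [zpow_natCast]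
    refine summable_mul_pow_of_bddAbove (fun _ => norm_nonneg _) ?_ hρ0.le hρρ₂
    refine (ha ρ₂ ⟨hρ₁.trans (hρ₁ρ.trans hρρ₂), hρ₂⟩).mono ?_
    rintro _ ⟨n, rfl⟩
    exact ⟨n, by simp⟩
  · simp only [zpow_neg, zpow_natCast, ← inv_pow]
    refine summable_mul_pow_of_bddAbove (fun _ => norm_nonneg _) ?_ (by positivity)
      (inv_strictAnti₀ hρ₁0 hρ₁ρ)
    refine (ha ρ₁ ⟨hρ₁, hρ₁ρ.trans hρ.2⟩).mono ?_
    rintro _ ⟨n, rfl⟩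
    exact ⟨-n, by simp⟩

theorem zpow_le_zpow_add_zpow {x ρ₁ ρ₂ : ℝ} (hρ₁ : 0 < ρ₁) (hx₁ : ρ₁ ≤ x) (hx₂ : x ≤ ρ₂)
    (n : ℤ) : x ^ n ≤ ρ₁ ^ n + ρ₂ ^ n := by
  have hx : 0 < x := hρ₁.trans_le hx₁
  obtain ⟨m, rfl | rfl⟩ := Int.eq_nat_or_neg n
  · have : x ^ m ≤ ρ₂ ^ m := pow_le_pow_left₀ hx.le hx₂ m
    simp only [zpow_natCast]
    linarith [pow_pos hρ₁ m]
  · have : (x ^ m)⁻¹ ≤ (ρ₁ ^ m)⁻¹ := inv_anti₀ (pow_pos hρ₁ m) (pow_le_pow_left₀ hρ₁.le hx₁ m)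
    simp only [zpow_neg, zpow_natCast]
    linarith [inv_pos.2 (pow_pos (hρ₁.trans_le (hx₁.trans hx₂)) m)]

theorem differentiableAt_tsum_mul_zpow {a : ℤ → ℂ} {r₁ r₂ : ℝ} (hr₁ : 0 ≤ r₁)
    (ha : ∀ ρ ∈ Ioo r₁ r₂, BddAbove (range fun n : ℤ => ‖a n‖ * ρ ^ n)) {z : ℂ}
    (hz : ‖z‖ ∈ Ioo r₁ r₂) : DifferentiableAt ℂ (fun w => ∑' n : ℤ, a n * w ^ n) z := by
  obtain ⟨ρ₁, hρ₁, hρ₁z⟩ := exists_between hz.1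
  obtain ⟨ρ₂, hzρ₂, hρ₂⟩ := exists_between hz.2
  have hρ₁0 : 0 < ρ₁ := hr₁.trans_lt hρ₁
  set U := {w : ℂ | ‖w‖ ∈ Ioo ρ₁ ρ₂}
  have hU : IsOpen U := isOpen_Ioo.preimage continuous_norm
  have h0U : (0 : ℂ) ∉ U := fun h => hρ₁0.not_gt (by simpa [U] using h.1)
  have hsum := (summable_norm_mul_zpow hr₁ ha ⟨hρ₁, hρ₁z.trans hz.2⟩).add
    (summable_norm_mul_zpow hr₁ ha ⟨hz.1.trans hzρ₂, hρ₂⟩)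
  refine (Complex.differentiableOn_tsum_of_summable_norm hsum
    (fun n => (differentiableOn_zpow n U (.inl h0U)).const_mul (a n)) hU
    (fun n w hw => ?_)).differentiableAt (hU.mem_nhds ⟨hρ₁z, hzρ₂⟩)
  rw [norm_mul, norm_zpow, ← mul_add]
  exact mul_le_mul_of_nonneg_left (zpow_le_zpow_add_zpow hρ₁0 hw.1.le hw.2.le n) (norm_nonneg _)

theorem exists_tendsto_sum_Icc_one_iff {G : Type*} [AddCommGroup G] [TopologicalSpace G]
    [IsTopologicalAddGroup G] (f : ℕ → G) :
    (∃ l, Tendsto (fun N : ℕ => ∑ n ∈ Finset.Icc 1 N, f n) atTop (𝓝 l)) ↔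
      ∃ l, Tendsto (fun N : ℕ => ∑ n ∈ Finset.range N, f n) atTop (𝓝 l) := by
  have hIcc : ∀ N, ∑ n ∈ Finset.Icc 1 N, f n = ∑ n ∈ Finset.range (N + 1), f n - f 0 := by
    intro N
    rw [← Finset.Ico_add_one_right_eq_Icc, Finset.sum_Ico_eq_sub _ (by lia : 1 ≤ N + 1)]
    simp
  simp_rw [hIcc]
  constructor
  · rintro ⟨l, hl⟩
    refine ⟨l + f 0, (tendsto_add_atTop_iff_nat 1).1 ((tendsto_sub_const_iff (f 0)).1 ?_)⟩
    simpa using hl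
  · rintro ⟨l, hl⟩
    exact ⟨l - f 0, ((tendsto_add_atTop_iff_nat 1).2 hl).sub_const (f 0)⟩

theorem bddAbove_range_norm_of_tendsto_sum_range {E : Type*} [SeminormedAddCommGroup E]
    {f : ℕ → E} {l : E} (h : Tendsto (fun N : ℕ => ∑ n ∈ Finset.range N, f n) atTop (𝓝 l)) :
    BddAbove (range fun n => ‖f n‖) := by
  have hf : Tendsto f atTop (𝓝 0) := by
    simpa [Finset.sum_range_succ] using ((tendsto_add_atTop_iff_nat 1).2 h).sub h
  exact hf.norm.bddAbove_range

theorem bddAbove_range_of_nat_of_neg {f : ℤ → ℝ} (h₁ : BddAbove (range fun n : ℕ => f n))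
    (h₂ : BddAbove (range fun n : ℕ => f (-n))) : BddAbove (range f) := by
  refine (h₁.union h₂).mono ?_
  rintro _ ⟨n, rfl⟩
  obtain ⟨m, rfl | rfl⟩ := Int.eq_nat_or_neg n
  exacts [.inl ⟨m, rfl⟩, .inr ⟨m, rfl⟩]

theorem bddAbove_norm_mul_zpow_of_tendsto {a : ℤ → ℂ} {ρ : ℝ} (hρ : 0 < ρ)
    (hpos : ∃ l, Tendsto (fun N : ℕ => ∑ n ∈ Finset.range N, a n * (ρ : ℂ) ^ n) atTop (𝓝 l))
    (hneg : ∃ l, Tendsto (fun N : ℕ => ∑ n ∈ Finset.Icc 1 N, a (-(n : ℤ)) * (ρ : ℂ) ^ (-(n : ℤ)))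
      atTop (𝓝 l)) :
    BddAbove (range fun n : ℤ => ‖a n‖ * ρ ^ n) := by
  obtain ⟨lpos, hpos⟩ := hpos
  obtain ⟨lneg, hneg⟩ := (exists_tendsto_sum_Icc_one_iff _).1 hneg
  refine bddAbove_range_of_nat_of_neg ?_ ?_
  · simpa [abs_of_pos hρ] using bddAbove_range_norm_of_tendsto_sum_range hpos
  · simpa [abs_of_pos hρ] using bddAbove_range_norm_of_tendsto_sum_range hneg

theorem tendsto_sum_mul_zpow_of_summable {a : ℤ → ℂ} {z : ℂ}
    (h : Summable fun n : ℤ => a n * z ^ n) :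
    (∃ l, Tendsto (fun N : ℕ => ∑ n ∈ Finset.range N, a n * z ^ n) atTop (𝓝 l)) ∧
      ∃ l, Tendsto (fun N : ℕ => ∑ n ∈ Finset.Icc 1 N, a (-(n : ℤ)) * z ^ (-(n : ℤ)))
        atTop (𝓝 l) := by
  have hpos := (h.comp_injective Nat.cast_injective).hasSum.tendsto_sum_nat
  have hneg := (h.comp_injective (neg_injective.comp Nat.cast_injective)).hasSum.tendsto_sum_nat
  exact ⟨⟨_, by simpa using hpos⟩, (exists_tendsto_sum_Icc_one_iff _).2 ⟨_, hneg⟩⟩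

theorem forall_laurent_partial_sums_converge_iff_bddAbove {a : ℤ → ℂ} {r₁ r₂ : ℝ}
    (hr₁ : 0 ≤ r₁) :
    (∀ z : ℂ, r₁ < ‖z‖ → ‖z‖ < r₂ →
      (∃ l, Tendsto (fun N : ℕ => ∑ n ∈ Finset.range N, a n * z ^ n) atTop (𝓝 l)) ∧
      ∃ l, Tendsto (fun N : ℕ => ∑ n ∈ Finset.Icc 1 N, a (-(n : ℤ)) * z ^ (-(n : ℤ)))
        atTop (𝓝 l)) ↔
    ∀ ρ ∈ Ioo r₁ r₂, BddAbove (range fun n : ℤ => ‖a n‖ * ρ ^ n) := by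
  refine ⟨fun h ρ hρ => ?_, fun h z hz₁ hz₂ => ?_⟩
  · have hρ0 : 0 < ρ := hr₁.trans_lt hρ.1
    have hnorm : ‖(ρ : ℂ)‖ = ρ := by simp [hρ0.le]
    obtain ⟨hpos, hneg⟩ := h ρ (by rw [hnorm]; exact hρ.1) (by rw [hnorm]; exact hρ.2)
    exact bddAbove_norm_mul_zpow_of_tendsto hρ0 hpos hneg
  · refine tendsto_sum_mul_zpow_of_summable (.of_norm ?_)
    simpa [norm_zpow] using summable_norm_mul_zpow hr₁ h ⟨hz₁, hz₂⟩

/-- For a smooth 2π-periodic curve γ, a holomorphic extension to the annulus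
r₁ < |z| < r₂ (with boundary values γ on the unit circle) exists iff both the
nonnegative and negative parts of the Laurent series built from the Fourier
coefficients of γ converge at every point of the annulus. -/
theorem geodesic_exists_iff_laurent_series_converges
    (γ : ℝ → ℂ) (hγ : ContDiff ℝ (⊤ : ℕ∞) γ)
    (hper : ∀ θ : ℝ, γ (θ + 2 * π) = γ θ)
    (a : ℤ → ℂ)
    (ha : ∀ n : ℤ, a n = (2 * (π : ℂ))⁻¹ *
      ∫ θ in (0:ℝ)..(2 * π), γ θ * Complex.exp (-(n : ℂ) * (θ : ℂ) * Complex.I))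
    (r₁ r₂ : ℝ) (hr₁ : 0 < r₁) (hr₁' : r₁ < 1) (hr₂ : 1 < r₂) :
    (∃ g : ℂ → ℂ,
      (∀ z : ℂ, r₁ < ‖z‖ → ‖z‖ < r₂ → DifferentiableAt ℂ g z) ∧
      (∀ θ : ℝ, g (Complex.exp ((θ : ℂ) * Complex.I)) = γ θ)) ↔
    (∀ z : ℂ, r₁ < ‖z‖ → ‖z‖ < r₂ →
      (∃ l : ℂ, Tendsto (fun N : ℕ => ∑ n ∈ Finset.range N, a (n : ℤ) * z ^ n)
        atTop (nhds l)) ∧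
      (∃ l : ℂ, Tendsto (fun N : ℕ => ∑ n ∈ Finset.Icc 1 N, a (-(n : ℤ)) * z ^ (-(n : ℤ)))
        atTop (nhds l))) := by
  have h1 : (1 : ℝ) ∈ Ioo r₁ r₂ := ⟨hr₁', hr₂⟩
  rw [forall_laurent_partial_sums_converge_iff_bddAbove hr₁.le]
  constructor
  · rintro ⟨g, hg, hboundary⟩ ρ hρ
    have hcoeff : laurentCoeff g 1 = a := funext fun n => by
      simp only [laurentCoeff_one_eq, hboundary, ha]
    rw [← hcoeff]
    exact bddAbove_norm_laurentCoeff_mul_zpow hr₁.le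
      (fun z hz => (hg z hz.1 hz.2).differentiableWithinAt) h1 hρ
  · intro hbdd
    have hsum : Summable a := .of_norm (by simpa using summable_norm_mul_zpow hr₁.le hbdd h1)
    refine ⟨fun z => ∑' n : ℤ, a n * z ^ n,
      fun z hz₁ hz₂ => differentiableAt_tsum_mul_zpow hr₁.le hbdd ⟨hz₁, hz₂⟩, fun θ => ?_⟩
    exact (hasSum_mul_exp_zpow_of_summable hγ.continuous hper ha hsum θ).tsum_eq
end

section
/- Convexity of the length functional along holomorphic families of circles: let 0 < r₁ < r₂ and let g : ℂ → ℂ be holomorphic on the open annulus A = {z ∈ ℂ : r₁ < |z| < r₂}. Then the function λ : (log r₁, log r₂) → ℝ defined by λ(t) = ∫₀^{2π} |g′(e^{t}e^{iθ})| e^{t} dθ (the length of the image under g of the circle of radius e^t) is a convex function of t. -/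
/-!
With `Φ w = exp w * g' (exp w)`, holomorphic and `2πi`-periodic on the strip
`log r₁ < Re w < log r₂`, the length is `M t = ∫₀^{2π} ‖Φ (t + iθ)‖ dθ`. Fix `t = a x + b y`
and the unimodular weight `u θ = conj Φ(t + iθ) / ‖Φ(t + iθ)‖`. Then
`G w = ∫₀^{2π} u θ * Φ (w + iθ) dθ` is holomorphic, `G t = M t`, and by periodicity
`‖G w‖ ≤ M (Re w)`. Hadamard's three lines theorem on `x ≤ Re w ≤ y` gives
`M t ≤ M x ^ a * M y ^ b ≤ a * M x + b * M y`.
-/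

open Real Complex ComplexConjugate MeasureTheory Set Metric intervalIntegral Function
open Complex.HadamardThreeLines (verticalStrip verticalClosedStrip)

lemma Complex.norm_conj_div_norm_le_one (z : ℂ) : ‖conj z / ‖z‖‖ ≤ 1 := by
  rcases eq_or_ne z 0 with rfl | hz
  · simp
  · rw [norm_div, RCLike.norm_conj, norm_real, norm_norm, div_self (norm_ne_zero_iff.mpr hz)]

lemma Complex.conj_div_norm_mul_self (z : ℂ) : conj z / ‖z‖ * z = ‖z‖ := by
  rcases eq_or_ne z 0 with rfl | hz
  · simp
  · rw [div_mul_eq_mul_div, conj_mul', sq, mul_div_assoc, div_self (by simpa using hz), mul_one]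

lemma add_mul_sub_mem_uIcc {x y s : ℝ} (hs : s ∈ Icc (0 : ℝ) 1) : x + s * (y - x) ∈ uIcc x y := by
  rw [← segment_eq_uIcc]
  exact ⟨1 - s, s, by linarith [hs.2], hs.1, by ring, by ring⟩

noncomputable def verticalNormIntegral (Φ : ℂ → ℂ) (t : ℝ) : ℝ :=
  ∫ θ in (0 : ℝ)..2 * π, ‖Φ (t + θ * I)‖

noncomputable def verticalWeightedIntegral (u : ℝ → ℂ) (Φ : ℂ → ℂ) (w : ℂ) : ℂ :=
  ∫ θ in (0 : ℝ)..2 * π, u θ * Φ (w + θ * I)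

section

variable {Φ : ℂ → ℂ} {l₁ l₂ : ℝ}

lemma isOpen_verticalStrip (l₁ l₂ : ℝ) : IsOpen (verticalStrip l₁ l₂) :=
  isOpen_Ioo.preimage continuous_re

lemma add_mul_I_mem_verticalStrip {w : ℂ} (hw : w ∈ verticalStrip l₁ l₂) (θ : ℝ) :
    w + θ * I ∈ verticalStrip l₁ l₂ := by
  simpa [verticalStrip] using hw

lemma ContinuousOn.continuous_comp_add_mul_I (hΦ : ContinuousOn Φ (verticalStrip l₁ l₂)) {w : ℂ}
    (hw : w ∈ verticalStrip l₁ l₂) : Continuous fun θ : ℝ => Φ (w + θ * I) :=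
  hΦ.comp_continuous (by fun_prop) (add_mul_I_mem_verticalStrip hw)

lemma IsCompact.exists_bound_norm_add_mul_I (hΦ : ContinuousOn Φ (verticalStrip l₁ l₂))
    {K : Set ℂ} (hK : IsCompact K) (hKs : K ⊆ verticalStrip l₁ l₂) :
    ∃ C, ∀ w ∈ K, ∀ θ ∈ uIcc 0 (2 * π), ‖Φ (w + θ * I)‖ ≤ C := by
  have hL : IsCompact ((fun p : ℂ × ℝ => p.1 + p.2 * I) '' K ×ˢ uIcc 0 (2 * π)) :=
    (hK.prod isCompact_uIcc).image (by fun_prop)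
  obtain ⟨C, hC⟩ := hL.exists_bound_of_continuousOn <| hΦ.mono <| by
    rintro _ ⟨⟨w, θ⟩, ⟨hw, -⟩, rfl⟩
    exact add_mul_I_mem_verticalStrip (hKs hw) θ
  exact ⟨C, fun w hw θ hθ => hC _ ⟨(w, θ), ⟨hw, hθ⟩, rfl⟩⟩

lemma verticalNormIntegral_nonneg (Φ : ℂ → ℂ) (t : ℝ) : 0 ≤ verticalNormIntegral Φ t :=
  integral_nonneg two_pi_pos.le fun _ _ => norm_nonneg _

lemma bddAbove_verticalNormIntegral_image (hΦ : ContinuousOn Φ (verticalStrip l₁ l₂))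
    {K : Set ℝ} (hK : IsCompact K) (hKs : K ⊆ Ioo l₁ l₂) :
    BddAbove (verticalNormIntegral Φ '' K) := by
  obtain ⟨C, hC⟩ := (hK.image continuous_ofReal).exists_bound_norm_add_mul_I hΦ <| by
    rintro _ ⟨t, ht, rfl⟩
    simpa [verticalStrip] using hKs ht
  refine ⟨C * |2 * π - 0|, ?_⟩
  rintro _ ⟨t, ht, rfl⟩
  refine (le_abs_self _).trans ?_
  rw [verticalNormIntegral, ← norm_eq_abs]
  exact norm_integral_le_of_norm_le_const fun θ hθ =>
    (norm_norm _).trans_le (hC _ (mem_image_of_mem _ ht) θ (uIoc_subset_uIcc hθ))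

lemma Function.Periodic.integral_norm_add_mul_I (hper : Periodic Φ (2 * π * I)) (w : ℂ) :
    ∫ θ in (0 : ℝ)..2 * π, ‖Φ (w + θ * I)‖ = verticalNormIntegral Φ w.re := by
  have hq : Periodic (fun s : ℝ => ‖Φ (w.re + s * I)‖) (2 * π) := fun s => by
    simp only [ofReal_add, ofReal_mul, ofReal_ofNat, add_mul, ← add_assoc, hper _]
  calc ∫ θ in (0 : ℝ)..2 * π, ‖Φ (w + θ * I)‖
      = ∫ θ in (0 : ℝ)..2 * π, ‖Φ (w.re + ↑(θ + w.im) * I)‖ := by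
        congr! 4 with θ
        apply Complex.ext <;> simp [add_comm]
    _ = ∫ s in w.im..w.im + 2 * π, ‖Φ (w.re + s * I)‖ := by
        rw [integral_comp_add_right (fun s : ℝ => ‖Φ (w.re + s * I)‖), zero_add, add_comm]
    _ = verticalNormIntegral Φ w.re := by
        simpa [verticalNormIntegral] using hq.intervalIntegral_add_eq w.im 0

lemma norm_verticalWeightedIntegral_le (hΦ : ContinuousOn Φ (verticalStrip l₁ l₂))
    (hper : Periodic Φ (2 * π * I)) {u : ℝ → ℂ} (hu : ∀ θ, ‖u θ‖ ≤ 1) {w : ℂ}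
    (hw : w ∈ verticalStrip l₁ l₂) :
    ‖verticalWeightedIntegral u Φ w‖ ≤ verticalNormIntegral Φ w.re := by
  rw [← hper.integral_norm_add_mul_I w]
  refine norm_integral_le_of_norm_le two_pi_pos.le (.of_forall fun θ _ => ?_)
    ((hΦ.continuous_comp_add_mul_I hw).norm.intervalIntegrable _ _)
  simpa [norm_mul] using mul_le_of_le_one_left (norm_nonneg _) (hu θ)

lemma verticalWeightedIntegral_conj_div_norm (Φ : ℂ → ℂ) (t : ℝ) :
    verticalWeightedIntegral (fun θ => conj (Φ (t + θ * I)) / ‖Φ (t + θ * I)‖) Φ t =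
      verticalNormIntegral Φ t := by
  simp only [verticalWeightedIntegral, conj_div_norm_mul_self, intervalIntegral.integral_ofReal,
    verticalNormIntegral]

lemma differentiableOn_verticalWeightedIntegral (hΦ : DifferentiableOn ℂ Φ (verticalStrip l₁ l₂))
    {u : ℝ → ℂ} (hum : AEStronglyMeasurable u) (hu : ∀ θ, ‖u θ‖ ≤ 1) :
    DifferentiableOn ℂ (verticalWeightedIntegral u Φ) (verticalStrip l₁ l₂) := by
  intro w₀ hw₀
  have hΦ' := (hΦ.deriv (isOpen_verticalStrip l₁ l₂)).continuousOn
  obtain ⟨ε, hε, hball⟩ :=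
    nhds_basis_closedBall.mem_iff.mp ((isOpen_verticalStrip l₁ l₂).mem_nhds hw₀)
  obtain ⟨C, hC⟩ := (isCompact_closedBall w₀ ε).exists_bound_norm_add_mul_I hΦ' hball
  refine (hasDerivAt_integral_of_dominated_loc_of_deriv_le (bound := fun _ => C)
    (F' := fun w θ => u θ * deriv Φ (w + θ * I)) (ball_mem_nhds w₀ hε) ?_ ?_ ?_ ?_
    intervalIntegrable_const ?_).2.differentiableAt.differentiableWithinAt
  · filter_upwards [(isOpen_verticalStrip l₁ l₂).mem_nhds hw₀] with w hw
    exact hum.restrict.mul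
      (hΦ.continuousOn.continuous_comp_add_mul_I hw).aestronglyMeasurable
  · exact intervalIntegrable_iff.mpr <| (intervalIntegrable_iff.mp <|
      (hΦ.continuousOn.continuous_comp_add_mul_I hw₀).intervalIntegrable _ _).bdd_mul
        hum.restrict (.of_forall hu)
  · exact hum.restrict.mul
      (hΦ'.continuous_comp_add_mul_I hw₀).aestronglyMeasurable
  · refine .of_forall fun θ hθ w hw => ?_
    rw [norm_mul]
    exact mul_le_of_le_one_left (norm_nonneg _) (hu θ) |>.trans
      (hC w (ball_subset_closedBall hw) θ (uIoc_subset_uIcc hθ))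
  · refine .of_forall fun θ _ w hw => ?_
    have hwθ := add_mul_I_mem_verticalStrip (hball (ball_subset_closedBall hw)) θ
    exact (((hΦ.differentiableAt ((isOpen_verticalStrip l₁ l₂).mem_nhds hwθ)).hasDerivAt.comp w
      ((hasDerivAt_id w).add_const _)).const_mul (u θ)).congr_deriv (by simp)

lemma exists_differentiableOn_norm_le_verticalNormIntegral
    (hΦ : DifferentiableOn ℂ Φ (verticalStrip l₁ l₂)) (hper : Periodic Φ (2 * π * I)) {t : ℝ}
    (ht : t ∈ Ioo l₁ l₂) :
    ∃ G : ℂ → ℂ, DifferentiableOn ℂ G (verticalStrip l₁ l₂) ∧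
      (∀ w ∈ verticalStrip l₁ l₂, ‖G w‖ ≤ verticalNormIntegral Φ w.re) ∧
      ‖G t‖ = verticalNormIntegral Φ t := by
  have hc : Continuous fun θ : ℝ => Φ (t + θ * I) :=
    hΦ.continuousOn.continuous_comp_add_mul_I (by simpa [verticalStrip] using ht)
  have hu_meas : AEStronglyMeasurable fun θ : ℝ => conj (Φ (t + θ * I)) / ‖Φ (t + θ * I)‖ :=
    ((continuous_conj.comp hc).measurable.div
      (continuous_ofReal.comp hc.norm).measurable).aestronglyMeasurable
  have hu_le (θ : ℝ) : ‖conj (Φ (t + θ * I)) / ‖Φ (t + θ * I)‖‖ ≤ 1 :=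
    norm_conj_div_norm_le_one _
  refine ⟨_, differentiableOn_verticalWeightedIntegral hΦ hu_meas hu_le,
    fun w hw => norm_verticalWeightedIntegral_le hΦ.continuousOn hper hu_le hw, ?_⟩
  rw [verticalWeightedIntegral_conj_div_norm, norm_real,
    norm_of_nonneg (verticalNormIntegral_nonneg Φ t)]

lemma verticalNormIntegral_le_rpow_mul_rpow (hΦ : DifferentiableOn ℂ Φ (verticalStrip l₁ l₂))
    (hper : Periodic Φ (2 * π * I)) {x y : ℝ} (hx : x ∈ Ioo l₁ l₂) (hy : y ∈ Ioo l₁ l₂)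
    {a b : ℝ} (ha : 0 ≤ a) (hb : 0 ≤ b) (hab : a + b = 1) :
    verticalNormIntegral Φ (a * x + b * y) ≤
      verticalNormIntegral Φ x ^ a * verticalNormIntegral Φ y ^ b := by
  set M := verticalNormIntegral Φ
  set aff : ℂ → ℂ := fun w => x + w * (y - x)
  have h_re (w : ℂ) : (aff w).re = x + w.re * (y - x) := by simp [aff]
  have h_uIcc : uIcc x y ⊆ Ioo l₁ l₂ := ordConnected_Ioo.uIcc_subset hx hy
  have h_aff (w : ℂ) (hw : w ∈ verticalClosedStrip 0 1) : (aff w).re ∈ uIcc x y :=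
    h_re w ▸ add_mul_sub_mem_uIcc hw
  have h_maps : MapsTo aff (verticalClosedStrip 0 1) (verticalStrip l₁ l₂) :=
    fun w hw => h_uIcc (h_aff w hw)
  have hb_mem : (b : ℂ) ∈ verticalClosedStrip 0 1 :=
    ⟨by rw [ofReal_re]; exact hb, by rw [ofReal_re]; linarith⟩
  have h_aff_b : aff b = ↑(a * x + b * y) := by
    have hab' : (a : ℂ) + b = 1 := mod_cast hab
    simp only [aff]; push_cast; linear_combination (-(x : ℂ)) * hab'
  have ht := h_aff b hb_mem
  rw [h_aff_b, ofReal_re] at ht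
  obtain ⟨G, hG_diff, hG_le, hG_t⟩ :=
    exists_differentiableOn_norm_le_verticalNormIntegral hΦ hper (h_uIcc ht)
  obtain ⟨B, hB⟩ := bddAbove_verticalNormIntegral_image hΦ.continuousOn isCompact_uIcc h_uIcc
  have hthree := Complex.HadamardThreeLines.norm_le_interp_of_mem_verticalClosedStrip₀₁'
    (G ∘ aff) (a := M x) (b := M y) hb_mem ?_ ?_ ?_ ?_
  · rwa [comp_apply, h_aff_b, hG_t, ofReal_re, ← hab, add_sub_cancel_right] at hthree
  · refine DifferentiableOn.diffContOnCl ?_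
    rw [verticalStrip, closure_preimage_re, closure_Ioo zero_ne_one]
    exact hG_diff.comp (by fun_prop : Differentiable ℂ aff).differentiableOn h_maps
  · refine ⟨B, ?_⟩
    rintro _ ⟨w, hw, rfl⟩
    exact (hG_le _ (h_maps hw)).trans (hB (mem_image_of_mem _ (h_aff w hw)))
  · intro w (hw : w.re = 0)
    refine (hG_le _ (h_maps (by simp [verticalClosedStrip, hw]))).trans_eq ?_
    rw [h_re, hw, zero_mul, add_zero]
  · intro w (hw : w.re = 1)
    refine (hG_le _ (h_maps (by simp [verticalClosedStrip, hw]))).trans_eq ?_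
    rw [h_re, hw, one_mul, add_sub_cancel]

theorem convexOn_verticalNormIntegral (hΦ : DifferentiableOn ℂ Φ (verticalStrip l₁ l₂))
    (hper : Periodic Φ (2 * π * I)) : ConvexOn ℝ (Ioo l₁ l₂) (verticalNormIntegral Φ) :=
  ⟨convex_Ioo l₁ l₂, fun _ hx _ hy _ _ ha hb hab =>
    (verticalNormIntegral_le_rpow_mul_rpow hΦ hper hx hy ha hb hab).trans <|
      geom_mean_le_arith_mean2_weighted ha hb (verticalNormIntegral_nonneg Φ _)
        (verticalNormIntegral_nonneg Φ _) hab⟩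

end

/-- Convexity of the length functional along a holomorphic family of circles:
if g is holomorphic on the annulus r₁ < |z| < r₂, then the length of the image
of the circle of radius eᵗ is a convex function of t on (log r₁, log r₂). -/
theorem length_functional_convex
    (r₁ r₂ : ℝ) (hr₁ : 0 < r₁) (hr₂ : r₁ < r₂)
    (g : ℂ → ℂ)
    (hg : ∀ z : ℂ, r₁ < ‖z‖ → ‖z‖ < r₂ → DifferentiableAt ℂ g z) :
    ConvexOn ℝ (Set.Ioo (Real.log r₁) (Real.log r₂))
      (fun t : ℝ => ∫ θ in (0:ℝ)..(2 * π),
        ‖deriv g ((Real.exp t : ℂ) * Complex.exp ((θ : ℂ) * Complex.I))‖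
          * Real.exp t) := by
  set Φ : ℂ → ℂ := Complex.exp * (deriv g ∘ Complex.exp)
  have hA : IsOpen (norm ⁻¹' Ioo r₁ r₂ : Set ℂ) := isOpen_Ioo.preimage continuous_norm
  have h_exp :
      MapsTo Complex.exp (verticalStrip (Real.log r₁) (Real.log r₂)) (norm ⁻¹' Ioo r₁ r₂) :=
    fun w ⟨h₁, h₂⟩ => by
      rw [mem_preimage, norm_exp]
      exact ⟨(log_lt_iff_lt_exp hr₁).mp h₁, (lt_log_iff_exp_lt (hr₁.trans hr₂)).mp h₂⟩
  have hg_A : DifferentiableOn ℂ g (norm ⁻¹' Ioo r₁ r₂) :=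
    fun z hz => (hg z hz.1 hz.2).differentiableWithinAt
  have hg' := hg_A.deriv hA
  have hΦ : DifferentiableOn ℂ Φ (verticalStrip (Real.log r₁) (Real.log r₂)) :=
    differentiable_exp.differentiableOn.mul (hg'.comp differentiable_exp.differentiableOn h_exp)
  have h_length : (fun t : ℝ => ∫ θ in (0:ℝ)..(2 * π),
      ‖deriv g ((Real.exp t : ℂ) * Complex.exp ((θ : ℂ) * Complex.I))‖ * Real.exp t) =
      verticalNormIntegral Φ := by
    ext t
    refine integral_congr fun θ _ => ?_
    simp [Φ, Complex.exp_add, ← ofReal_exp, mul_comm]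
  rw [h_length]
  exact convexOn_verticalNormIntegral hΦ (exp_periodic.mul (exp_periodic.comp _))
end

section
/- Monotonicity of the length functional under holomorphic extension to the disk: let R > 0 and let g : ℂ → ℂ be holomorphic on the open disk {z ∈ ℂ : |z| < R}. Then the function Λ : (0,R) → ℝ defined by Λ(r) = ∫₀^{2π} |g′(re^{iθ})| r dθ (the length of the image under g of the circle of radius r) is monotone nondecreasing in r. -/
/-!
Since `Λ(r) = 2π r · M(r)`, where `M(r)` is the mean of `‖g′‖` over the circle of radius `r`, it
suffices that circle means of `‖h‖` increase with the radius for the holomorphic `h = g′`.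
For `‖w‖ = r < R`, the Poisson formula on the disk of radius `R` gives
`‖h w‖ ≤ ⨍_{‖z‖ = R} P(w, z) ‖h z‖`. Averaging over `w` and exchanging the two means, it remains
that `⨍_{‖w‖ = r} P(w, z) = 1` for `‖z‖ = R`: on these circles `P(w, z) = (R² - r²) / ‖z - w‖²`,
and the mean over one circle of a function of the distance to a point on the other one is
symmetric in the two circles, which turns this into the Poisson formula for the constant `1`.
-/

open Real MeasureTheory Metric Set Function

theorem norm_ofReal_sub_mul_exp_comm (a b θ : ℝ) :
    ‖(a : ℂ) - b * Complex.exp (θ * Complex.I)‖ = ‖(b : ℂ) - a * Complex.exp (θ * Complex.I)‖ := by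
  rw [← sq_eq_sq₀ (norm_nonneg _) (norm_nonneg _), Complex.sq_norm, Complex.sq_norm,
    Complex.normSq_apply, Complex.normSq_apply]
  simp only [Complex.sub_re, Complex.sub_im, Complex.ofReal_re, Complex.ofReal_im,
    Complex.re_ofReal_mul, Complex.im_ofReal_mul, Complex.exp_ofReal_mul_I_re,
    Complex.exp_ofReal_mul_I_im]
  linear_combination (b ^ 2 - a ^ 2) * sin_sq_add_cos_sq θ

section Averages

variable {E : Type*} [NormedAddCommGroup E] [NormedSpace ℝ E]

theorem norm_circleAverage_le_circleAverage_norm (f : ℂ → E) (c : ℂ) (R : ℝ) :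
    ‖circleAverage f c R‖ ≤ circleAverage (fun z ↦ ‖f z‖) c R := by
  rw [circleAverage_def, circleAverage_def, norm_smul, smul_eq_mul,
    Real.norm_of_nonneg (by positivity)]
  gcongr
  exact intervalIntegral.norm_integral_le_integral_norm two_pi_pos.le

theorem circleAverage_comp_mul_left {u : ℂ} (hu : ‖u‖ = 1) (f : ℂ → E) (R : ℝ) :
    circleAverage (fun z ↦ f (u * z)) 0 R = circleAverage f 0 R := by
  have hu' : circleMap 0 1 u.arg = u := by
    simpa [circleMap_zero, hu] using Complex.norm_mul_exp_arg_mul_I u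
  rw [circleAverage_eq_integral_add (η := u.arg) (f := f), circleAverage_def]
  congr! 3 with θ
  nth_rw 1 [← hu']
  rw [circleMap_zero_mul, one_mul, add_comm]

theorem circleAverage_comp_norm_sub_comm (k : ℝ → E) (z w : ℂ) :
    circleAverage (fun ζ ↦ k ‖z - ζ‖) 0 ‖w‖ = circleAverage (fun ζ ↦ k ‖w - ζ‖) 0 ‖z‖ := by
  have radial : ∀ (x : ℂ) (r : ℝ),
      circleAverage (fun ζ ↦ k ‖x - ζ‖) 0 r = circleAverage (fun ζ ↦ k ‖(‖x‖ : ℂ) - ζ‖) 0 r := by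
    intro x r
    set u := Complex.exp (x.arg * Complex.I)
    have hu : ‖u‖ = 1 := Complex.norm_exp_ofReal_mul_I _
    rw [← circleAverage_comp_mul_left hu]
    congr! 3 with ζ
    have hx : x - u * ζ = u * (‖x‖ - ζ) := by
      rw [mul_sub, mul_comm u (‖x‖ : ℂ), Complex.norm_mul_exp_arg_mul_I]
    rw [hx, norm_mul, hu, one_mul]
  rw [radial z, radial w, circleAverage_def, circleAverage_def]
  simp only [circleMap_zero, norm_ofReal_sub_mul_exp_comm]

theorem ContinuousOn.comp_circleMap_prodMap {X : Type*} [TopologicalSpace X] {F : ℂ → ℂ → X}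
    {c c' : ℂ} {r R : ℝ} (hF : ContinuousOn (uncurry F) (sphere c |r| ×ˢ sphere c' |R|)) :
    Continuous fun p : ℝ × ℝ ↦ F (circleMap c r p.1) (circleMap c' R p.2) :=
  hF.comp_continuous ((continuous_circleMap c r).prodMap (continuous_circleMap c' R))
    fun p ↦ ⟨circleMap_mem_sphere' c r p.1, circleMap_mem_sphere' c' R p.2⟩

variable {F : ℂ → ℂ → E} {c c' : ℂ} {r R : ℝ}

theorem ContinuousOn.circleIntegrable_circleAverage
    (hF : ContinuousOn (uncurry F) (sphere c |r| ×ˢ sphere c' |R|)) :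
    CircleIntegrable (fun w ↦ circleAverage (F w) c' R) c r :=
  (continuous_const.smul (intervalIntegral.continuous_parametric_intervalIntegral_of_continuous'
    hF.comp_circleMap_prodMap 0 (2 * π))).intervalIntegrable 0 (2 * π)

theorem ContinuousOn.circleAverage_circleAverage_comm
    (hF : ContinuousOn (uncurry F) (sphere c |r| ×ˢ sphere c' |R|)) :
    circleAverage (fun w ↦ circleAverage (F w) c' R) c r =
      circleAverage (fun z ↦ circleAverage (fun w ↦ F w z) c r) c' R := by
  simp only [circleAverage_def, intervalIntegral.integral_smul]
  congr 2
  simp only [intervalIntegral.integral_of_le two_pi_pos.le]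
  refine integral_integral_swap ?_
  rw [Measure.prod_restrict, ← Measure.volume_eq_prod]
  exact (hF.comp_circleMap_prodMap.continuousOn.integrableOn_compact
    (isCompact_Icc.prod isCompact_Icc)).mono_set (prod_mono Ioc_subset_Icc_self Ioc_subset_Icc_self)

end Averages

theorem poissonKernel_nonneg {c w z : ℂ} (h : ‖w - c‖ ≤ ‖z - c‖) : 0 ≤ poissonKernel c w z :=
  div_nonneg (sub_nonneg.2 (pow_le_pow_left₀ (norm_nonneg _) h 2)) (sq_nonneg _)

theorem continuousOn_poissonKernel (c : ℂ) :
    ContinuousOn (uncurry (poissonKernel c)) {p | p.1 ≠ p.2} := by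
  intro p hp
  have : ‖(p.2 - c) - (p.1 - c)‖ ^ 2 ≠ 0 := by
    simpa [sub_eq_zero] using Ne.symm hp
  change ContinuousWithinAt
    (fun p : ℂ × ℂ ↦ (‖p.2 - c‖ ^ 2 - ‖p.1 - c‖ ^ 2) / ‖(p.2 - c) - (p.1 - c)‖ ^ 2) _ p
  fun_prop (disch := exact this)

theorem circleAverage_poissonKernel_left {r : ℝ} {z : ℂ} (hr : 0 ≤ r) (hrz : r < ‖z‖) :
    circleAverage (fun w ↦ poissonKernel 0 w z) 0 r = 1 := by
  set k : ℝ → ℝ := fun t ↦ (‖z‖ ^ 2 - r ^ 2) / t ^ 2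
  have hr' : ‖(r : ℂ)‖ = r := by simp [abs_of_nonneg hr]
  calc circleAverage (fun w ↦ poissonKernel 0 w z) 0 r
      = circleAverage (fun w ↦ k ‖z - w‖) 0 ‖(r : ℂ)‖ := by
        rw [hr']
        refine circleAverage_congr_sphere fun w hw ↦ ?_
        simp_all [poissonKernel, k, abs_of_nonneg hr]
    _ = circleAverage (fun ζ ↦ k ‖(r : ℂ) - ζ‖) 0 ‖z‖ := circleAverage_comp_norm_sub_comm k z r
    _ = circleAverage (poissonKernel 0 r) 0 ‖z‖ := by
        refine circleAverage_congr_sphere fun ζ hζ ↦ ?_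
        simp_all [poissonKernel, k, abs_of_nonneg hr, norm_sub_rev]
    _ = 1 := by
        have hconst := InnerProductSpace.harmonicOnNhd_const (1 : ℝ) (s := closedBall (0 : ℂ) ‖z‖)
        simpa [Pi.mul_def] using hconst.circleAverage_poissonKernel_smul (w := r)
          (by simpa [abs_of_nonneg hr] using hrz)

section Holomorphic

variable {E : Type*} [NormedAddCommGroup E] [NormedSpace ℂ E] [CompleteSpace E] {f : ℂ → E}

theorem DiffContOnCl.norm_le_circleAverage_poissonKernel_mul_norm {c w : ℂ} {R : ℝ}
    (hf : DiffContOnCl ℂ f (ball c R)) (hw : w ∈ ball c R) :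
    ‖f w‖ ≤ Real.circleAverage (fun z ↦ poissonKernel c w z * ‖f z‖) c R := by
  have hR : 0 < R := pos_of_mem_ball hw
  calc ‖f w‖ = ‖Real.circleAverage (poissonKernel c w • f) c R‖ := by
        rw [hf.circleAverage_poissonKernel_smul hw]
    _ ≤ Real.circleAverage (fun z ↦ ‖(poissonKernel c w • f) z‖) c R :=
        norm_circleAverage_le_circleAverage_norm _ c R
    _ = Real.circleAverage (fun z ↦ poissonKernel c w z * ‖f z‖) c R := by
        refine circleAverage_congr_sphere fun z hz ↦ ?_
        rw [mem_sphere_iff_norm, abs_of_pos hR] at hz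
        have hwz : ‖w - c‖ ≤ ‖z - c‖ := hz ▸ (mem_ball_iff_norm.1 hw).le
        simp [norm_smul, Real.norm_of_nonneg (poissonKernel_nonneg hwz)]

theorem DiffContOnCl.circleAverage_norm_le {r R : ℝ} (hf : DiffContOnCl ℂ f (ball 0 R))
    (hr : 0 ≤ r) (hrR : r < R) :
    Real.circleAverage (fun z ↦ ‖f z‖) 0 r ≤ Real.circleAverage (fun z ↦ ‖f z‖) 0 R := by
  have hR : 0 < R := hr.trans_lt hrR
  have hf_cont : ContinuousOn f (closedBall 0 R) := closure_ball (0 : ℂ) hR.ne' ▸ hf.continuousOn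
  set K : ℂ → ℂ → ℝ := fun w z ↦ poissonKernel 0 w z * ‖f z‖
  have hK : ContinuousOn (uncurry K) (sphere 0 |r| ×ˢ sphere 0 |R|) := by
    rw [abs_of_nonneg hr, abs_of_pos hR]
    refine ((continuousOn_poissonKernel 0).mono fun p hp ↦ ?_).mul
      ((hf_cont.mono sphere_subset_closedBall).norm.comp continuousOn_snd fun p hp ↦ hp.2)
    have h1 := mem_sphere_zero_iff_norm.1 hp.1
    have h2 := mem_sphere_zero_iff_norm.1 hp.2
    exact fun h ↦ hrR.ne (h1.symm.trans (h ▸ h2))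
  calc Real.circleAverage (fun w ↦ ‖f w‖) 0 r
      ≤ Real.circleAverage (fun w ↦ Real.circleAverage (K w) 0 R) 0 r := by
        refine circleAverage_mono ?_ hK.circleIntegrable_circleAverage fun w hw ↦ ?_
        · exact ((hf_cont.mono (sphere_subset_closedBall.trans
            (closedBall_subset_closedBall hrR.le))).norm).circleIntegrable hr
        · refine hf.norm_le_circleAverage_poissonKernel_mul_norm ?_
          rw [mem_sphere_zero_iff_norm, abs_of_nonneg hr] at hw
          exact mem_ball_zero_iff.2 (hw ▸ hrR)
    _ = Real.circleAverage (fun z ↦ Real.circleAverage (fun w ↦ K w z) 0 r) 0 R :=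
        hK.circleAverage_circleAverage_comm
    _ = Real.circleAverage (fun z ↦ ‖f z‖) 0 R := by
        refine circleAverage_congr_sphere fun z hz ↦ ?_
        rw [mem_sphere_zero_iff_norm, abs_of_pos hR] at hz
        have hsmul := circleAverage_fun_smul (a := ‖f z‖) (f := fun w ↦ poissonKernel 0 w z)
          (c := 0) (R := r)
        simp only [smul_eq_mul] at hsmul
        simp only [K, mul_comm _ ‖f z‖, hsmul, circleAverage_poissonKernel_left hr (hz ▸ hrR), mul_one]

theorem DifferentiableOn.monotoneOn_circleAverage_norm {R : ℝ}
    (hf : DifferentiableOn ℂ f (ball 0 R)) :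
    MonotoneOn (fun r ↦ circleAverage (fun z ↦ ‖f z‖) 0 r) (Ico 0 R) := by
  intro r₁ hr₁ r₂ hr₂ hle
  rcases hle.eq_or_lt with rfl | hlt
  · rfl
  exact (hf.diffContOnCl_ball (closedBall_subset_ball hr₂.2)).circleAverage_norm_le hr₁.1 hlt

end Holomorphic

theorem length_functional_monotone_general
    (R : ℝ)
    (g : ℂ → ℂ)
    (hg : ∀ z : ℂ, ‖z‖ < R → DifferentiableAt ℂ g z) :
    MonotoneOn
      (fun r : ℝ => ∫ θ in (0:ℝ)..(2 * π),
        ‖deriv g ((r : ℂ) * Complex.exp ((θ : ℂ) * Complex.I))‖ * r)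
      (Set.Ioo (0:ℝ) R) := by
  have hg' : DifferentiableOn ℂ g (ball 0 R) := fun z hz ↦
    (hg z (mem_ball_zero_iff.1 hz)).differentiableWithinAt
  have hmono := (hg'.deriv isOpen_ball).monotoneOn_circleAverage_norm
  have hlength : ∀ r : ℝ, ∫ θ in (0:ℝ)..(2 * π),
      ‖deriv g ((r : ℂ) * Complex.exp ((θ : ℂ) * Complex.I))‖ * r =
        2 * π * circleAverage (fun z ↦ ‖deriv g z‖) 0 r * r := by
    intro r
    rw [circleAverage_def, smul_eq_mul, ← mul_assoc, mul_inv_cancel₀ two_pi_pos.ne', one_mul,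
      ← intervalIntegral.integral_mul_const]
    simp only [circleMap_zero]
  intro r₁ hr₁ r₂ hr₂ hle
  have hmean := hmono (Ioo_subset_Ico_self hr₁) (Ioo_subset_Ico_self hr₂) hle
  have hmean_nonneg : 0 ≤ circleAverage (fun z ↦ ‖deriv g z‖) 0 r₂ :=
    circleAverage_nonneg_of_nonneg fun _ _ ↦ norm_nonneg _
  simp only [hlength]
  gcongr
  exact hr₁.1.le

/-- Monotonicity of the length functional under holomorphic extension to the disk:
if g is holomorphic on the disk |z| < R then the length of the image of the circle
of radius r is nondecreasing in r on (0, R). -/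
theorem length_functional_monotone
    (R : ℝ) (hR : 0 < R)
    (g : ℂ → ℂ)
    (hg : ∀ z : ℂ, ‖z‖ < R → DifferentiableAt ℂ g z) :
    MonotoneOn
      (fun r : ℝ => ∫ θ in (0:ℝ)..(2 * π),
        ‖deriv g ((r : ℂ) * Complex.exp ((θ : ℂ) * Complex.I))‖ * r)
      (Set.Ioo (0:ℝ) R) :=
  length_functional_monotone_general R g hg
end

section
/- Second variation of length along a geodesic family of plane curves: let ε > 0, let f : ℝ → ℝ be smooth and 2π-periodic, and let γ : ℝ × (−ε,ε) → ℂ be smooth with γ(s+2π, t) = γ(s,t) for all s,t, satisfying the geodesic family equation ∂γ/∂t(s,t) = i f(s) ∂γ/∂s(s,t) for all (s,t), and with ∂γ/∂s(s,t) ≠ 0 for all (s,t). Assume γ(·,0) is parametrized by arclength, i.e. |∂γ/∂s(s,0)| = 1 for all s, and let κ : ℝ → ℝ be the smooth function (curvature of γ(·,0)) determined by ∂²γ/∂s²(s,0) = i κ(s) ∂γ/∂s(s,0). Then the length λ(t) = ∫₀^{2π} |∂γ/∂s(s,t)| ds is twice differentiable at t = 0 and λ″(0) = ∫₀^{2π}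 ( f′(s)² + f(s)² κ(s)² ) ds ≥ 0. -/
/-!
Write `V = ∂ₛγ`. Differentiating the geodesic equation `∂ₜγ = i f V` in `s` and swapping the
mixed partials gives `∂ₜV = i (f' V + f ∂ₛV)`, so the speed `‖V‖` has `t`-derivative
`f ⟪V, i ∂ₛV⟫ / ‖V‖`. Differentiating once more at `t = 0`, where `‖V‖ = 1`, `∂ₛV = iκV` and
`∂ₛ²V = (iκ' - κ²) V`, gives `f²κ² - f f''`. Both derivatives pass under the integral since the
speed is smooth in `(s, t)`, and periodicity turns `-∫ f f''` into `∫ f'²`.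
-/

open Set Topology Real
open scoped ContDiff RealInnerProductSpace

section PartialDeriv

variable {E : Type*} [NormedAddCommGroup E] [NormedSpace ℝ E]

noncomputable def pderivFst (F : ℝ × ℝ → E) (p : ℝ × ℝ) : E := fderiv ℝ F p (1, 0)

noncomputable def pderivSnd (F : ℝ × ℝ → E) (p : ℝ × ℝ) : E := fderiv ℝ F p (0, 1)

notation "∂₁" => pderivFst
notation "∂₂" => pderivSnd

variable {F G : ℝ × ℝ → E} {Ω : Set (ℝ × ℝ)} {s t : ℝ} {x : E} {n m : ℕ∞ω}

theorem DifferentiableAt.hasDerivAt_pderivFst (h : DifferentiableAt ℝ F (s, t)) :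
    HasDerivAt (fun s' => F (s', t)) (∂₁ F (s, t)) s :=
  h.hasFDerivAt.comp_hasDerivAt s ((hasDerivAt_id s).prodMk (hasDerivAt_const s t))

theorem DifferentiableAt.hasDerivAt_pderivSnd (h : DifferentiableAt ℝ F (s, t)) :
    HasDerivAt (fun t' => F (s, t')) (∂₂ F (s, t)) t :=
  h.hasFDerivAt.comp_hasDerivAt t ((hasDerivAt_const t s).prodMk (hasDerivAt_id t))

theorem ContDiffOn.pderivFst (hF : ContDiffOn ℝ n F Ω) (hΩ : IsOpen Ω) (hmn : m + 1 ≤ n) :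
    ContDiffOn ℝ m (∂₁ F) Ω :=
  (hF.fderiv_of_isOpen hΩ hmn).clm_apply contDiffOn_const

theorem ContDiffOn.pderivSnd (hF : ContDiffOn ℝ n F Ω) (hΩ : IsOpen Ω) (hmn : m + 1 ≤ n) :
    ContDiffOn ℝ m (∂₂ F) Ω :=
  (hF.fderiv_of_isOpen hΩ hmn).clm_apply contDiffOn_const

theorem ContDiffOn.differentiableAt_of_isOpen (hF : ContDiffOn ℝ n F Ω) (hΩ : IsOpen Ω)
    (hn : n ≠ 0) {p : ℝ × ℝ} (hp : p ∈ Ω) : DifferentiableAt ℝ F p :=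
  (hF.contDiffAt (hΩ.mem_nhds hp)).differentiableAt hn

theorem pderivFst_eq_of_eqOn (hF : DifferentiableAt ℝ F (s, t)) (hΩ : IsOpen Ω)
    (hst : (s, t) ∈ Ω) (hFG : EqOn F G Ω) (hG : HasDerivAt (fun s' => G (s', t)) x s) :
    ∂₁ F (s, t) = x :=
  hF.hasDerivAt_pderivFst.unique <| hG.congr_of_eventuallyEq <| by
    filter_upwards [(hΩ.preimage (continuous_id.prodMk continuous_const)).mem_nhds hst]
      with s' hs' using hFG hs'

theorem pderivSnd_eq_of_eqOn (hF : DifferentiableAt ℝ F (s, t)) (hΩ : IsOpen Ω)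
    (hst : (s, t) ∈ Ω) (hFG : EqOn F G Ω) (hG : HasDerivAt (fun t' => G (s, t')) x t) :
    ∂₂ F (s, t) = x :=
  hF.hasDerivAt_pderivSnd.unique <| hG.congr_of_eventuallyEq <| by
    filter_upwards [(hΩ.preimage (continuous_const.prodMk continuous_id)).mem_nhds hst]
      with t' ht' using hFG ht'

theorem pderivSnd_pderivFst_comm (hF : ContDiffOn ℝ 2 F Ω) (hΩ : IsOpen Ω) {p : ℝ × ℝ}
    (hp : p ∈ Ω) : ∂₂ (∂₁ F) p = ∂₁ (∂₂ F) p := by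
  have hsymm := (hF.contDiffAt (hΩ.mem_nhds hp)).isSymmSndFDerivAt (by simp) (1, 0) (0, 1)
  have hF' : DifferentiableAt ℝ (fderiv ℝ F) p :=
    (hF.fderiv_of_isOpen hΩ le_rfl).differentiableAt_of_isOpen hΩ one_ne_zero hp
  have hslice (v : ℝ × ℝ) :
      fderiv ℝ (fun q => fderiv ℝ F q v) p = (fderiv ℝ (fderiv ℝ F) p).flip v := by
    simp [fderiv_clm_apply hF' (differentiableAt_const v)]
  change fderiv ℝ (fun q => fderiv ℝ F q (1, 0)) p (0, 1)
    = fderiv ℝ (fun q => fderiv ℝ F q (0, 1)) p (1, 0)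
  rw [hslice, hslice]
  exact hsymm.symm

theorem pderivSnd_pderivFst_eq_of_eqOn (hF : ContDiffOn ℝ 2 F Ω) (hΩ : IsOpen Ω)
    (hst : (s, t) ∈ Ω) (hFG : EqOn (∂₂ F) G Ω) (hG : HasDerivAt (fun s' => G (s', t)) x s) :
    ∂₂ (∂₁ F) (s, t) = x := by
  rw [pderivSnd_pderivFst_comm hF hΩ hst]
  exact pderivFst_eq_of_eqOn ((hF.pderivSnd hΩ le_rfl).differentiableAt_of_isOpen hΩ
    one_ne_zero hst) hΩ hst hFG hG

theorem ContinuousOn.continuous_slice {X : Type*} [TopologicalSpace X] {G : ℝ × ℝ → X}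
    {U : Set ℝ} (hG : ContinuousOn G (univ ×ˢ U)) (ht : t ∈ U) : Continuous fun s => G (s, t) :=
  hG.comp_continuous (continuous_id.prodMk continuous_const) fun _ => ⟨trivial, ht⟩

theorem hasDerivAt_intervalIntegral_pderivSnd {U : Set ℝ} (hU : IsOpen U)
    (hF : ContDiffOn ℝ 1 F (univ ×ˢ U)) (a b : ℝ) {t₀ : ℝ} (ht₀ : t₀ ∈ U) :
    HasDerivAt (fun t => ∫ s in a..b, F (s, t)) (∫ s in a..b, ∂₂ F (s, t₀)) t₀ := by
  have hΩ : IsOpen (univ ×ˢ U : Set (ℝ × ℝ)) := isOpen_univ.prod hU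
  have hF' : ContinuousOn (∂₂ F) (univ ×ˢ U) := (hF.pderivSnd hΩ (m := 0) le_rfl).continuousOn
  obtain ⟨δ, hδ, hball⟩ := Metric.isOpen_iff.mp hU t₀ ht₀
  have hcb : Metric.closedBall t₀ (δ / 2) ⊆ U :=
    (Metric.closedBall_subset_ball (by linarith)).trans hball
  obtain ⟨C, hC⟩ := (isCompact_uIcc.prod (isCompact_closedBall t₀ (δ / 2)))
    |>.exists_bound_of_continuousOn (hF'.mono (prod_mono (subset_univ _) hcb))
  refine (intervalIntegral.hasDerivAt_integral_of_dominated_loc_of_deriv_le (bound := fun _ => C)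
    (F := fun t s => F (s, t)) (F' := fun t s => ∂₂ F (s, t))
    (Metric.ball_mem_nhds t₀ (half_pos hδ)) ?_
    ((hF.continuousOn.continuous_slice ht₀).intervalIntegrable _ _)
    (hF'.continuous_slice ht₀).aestronglyMeasurable ?_ intervalIntegrable_const ?_).2
  · filter_upwards [hU.mem_nhds ht₀] with t ht
    exact (hF.continuousOn.continuous_slice ht).aestronglyMeasurable
  · refine .of_forall fun s hs t ht => hC (s, t) ⟨uIoc_subset_uIcc hs, ?_⟩
    exact Metric.ball_subset_closedBall ht
  · refine .of_forall fun s _ t ht => ?_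
    exact (hF.differentiableAt_of_isOpen hΩ one_ne_zero
      ⟨trivial, hcb (Metric.ball_subset_closedBall ht)⟩).hasDerivAt_pderivSnd

theorem hasDerivAt_deriv_intervalIntegral {U : Set ℝ} (hU : IsOpen U)
    (hF : ContDiffOn ℝ 2 F (univ ×ˢ U)) (a b : ℝ) {t₀ : ℝ} (ht₀ : t₀ ∈ U) :
    DifferentiableAt ℝ (fun t => ∫ s in a..b, F (s, t)) t₀ ∧
      HasDerivAt (deriv fun t => ∫ s in a..b, F (s, t)) (∫ s in a..b, ∂₂ (∂₂ F) (s, t₀)) t₀ := by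
  have hΩ : IsOpen (univ ×ˢ U : Set (ℝ × ℝ)) := isOpen_univ.prod hU
  refine ⟨(hasDerivAt_intervalIntegral_pderivSnd hU (hF.of_le (by simp)) a b ht₀).differentiableAt,
    (hasDerivAt_intervalIntegral_pderivSnd hU (hF.pderivSnd hΩ le_rfl) a b ht₀)
      |>.congr_of_eventuallyEq ?_⟩
  filter_upwards [hU.mem_nhds ht₀] with t ht
  exact (hasDerivAt_intervalIntegral_pderivSnd hU (hF.of_le (by simp)) a b ht).deriv

end PartialDeriv

theorem HasDerivAt.norm {F : Type*} [NormedAddCommGroup F] [InnerProductSpace ℝ F] {a : ℝ → F}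
    {a' : F} {t : ℝ} (ha : HasDerivAt a a' t) (h0 : a t ≠ 0) :
    HasDerivAt (fun t => ‖a t‖) (⟪a t, a'⟫ / ‖a t‖) t := by
  have h := ha.norm_sq.sqrt (pow_ne_zero 2 (norm_ne_zero_iff.2 h0))
  simp only [Real.sqrt_sq (norm_nonneg _)] at h
  convert h using 1
  field_simp

section Periodic

variable {f : ℝ → ℝ} {T : ℝ}

theorem Function.Periodic.deriv (hf : Function.Periodic f T) :
    Function.Periodic (_root_.deriv f) T := fun x => by
  rw [← deriv_comp_add_const, show (fun y => f (y + T)) = f from funext hf]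

theorem intervalIntegral_mul_deriv_deriv_of_periodic (hf : ContDiff ℝ 2 f)
    (hper : Function.Periodic f T) :
    ∫ x in (0 : ℝ)..T, f x * deriv (deriv f) x = -∫ x in (0 : ℝ)..T, deriv f x ^ 2 := by
  have hf' : ContDiff ℝ 1 (deriv f) := hf.iterate_deriv' 1 1
  rw [intervalIntegral.integral_mul_deriv_eq_deriv_mul
    (fun x _ => (hf.differentiable two_ne_zero x).hasDerivAt)
    (fun x _ => (hf'.differentiable one_ne_zero x).hasDerivAt)
    (hf'.continuous.intervalIntegrable _ _) (hf'.continuous_deriv le_rfl |>.intervalIntegrable _ _)]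
  simp only [← sq]
  rw [show f T = f 0 by simpa using hper 0, show deriv f T = deriv f 0 by simpa using hper.deriv 0]
  ring

theorem intervalIntegral_sq_mul_sq_sub_mul_deriv_deriv_of_periodic (hf : ContDiff ℝ 2 f)
    (hper : Function.Periodic f T) {κ : ℝ → ℝ} (hκ : Continuous κ) :
    ∫ x in (0 : ℝ)..T, (f x ^ 2 * κ x ^ 2 - f x * deriv (deriv f) x)
      = ∫ x in (0 : ℝ)..T, (deriv f x ^ 2 + f x ^ 2 * κ x ^ 2) := by
  have hint : ∀ {g : ℝ → ℝ}, Continuous g → IntervalIntegrable g MeasureTheory.volume 0 T :=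
    fun hg => hg.intervalIntegrable _ _
  have hf' := hf.continuous_deriv one_le_two
  have hf'' := (hf.iterate_deriv' 1 1).continuous_deriv le_rfl
  rw [intervalIntegral.integral_sub (hint (by fun_prop)) (hint (by fun_prop)),
    intervalIntegral.integral_add (hint (by fun_prop)) (hint (by fun_prop)),
    intervalIntegral_mul_deriv_deriv_of_periodic hf hper]
  ring

end Periodic

section GeodesicFamily

open Complex

variable {Ω : Set (ℝ × ℝ)} {Γ : ℝ × ℝ → ℂ} {f : ℝ → ℝ} {s t : ℝ}

theorem pderivFst_pderivFst_of_curvature {X : ℝ × ℝ → ℂ} {κ : ℝ → ℝ}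
    (hX : DifferentiableAt ℝ X (s, t)) (hX' : DifferentiableAt ℝ (∂₁ X) (s, t))
    (hκ : DifferentiableAt ℝ κ s) (hXκ : ∀ s', ∂₁ X (s', t) = I * κ s' * X (s', t)) :
    ∂₁ (∂₁ X) (s, t) = (I * deriv κ s - κ s ^ 2) * X (s, t) := by
  have h := hX'.hasDerivAt_pderivFst
  simp only [hXκ] at h
  rw [h.unique ((hκ.hasDerivAt.ofReal_comp.const_mul I).mul hX.hasDerivAt_pderivFst), hXκ]
  linear_combination (κ s ^ 2 * X (s, t)) * I_sq

theorem pderivSnd_pderivFst_of_geodesic (hΩ : IsOpen Ω) (hΓ : ContDiffOn ℝ ∞ Γ Ω)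
    (hf : ContDiff ℝ ∞ f) (hgeo : EqOn (∂₂ Γ) (fun p => I * f p.1 * ∂₁ Γ p) Ω)
    (hst : (s, t) ∈ Ω) :
    ∂₂ (∂₁ Γ) (s, t) = I * deriv f s * ∂₁ Γ (s, t) + I * f s * ∂₁ (∂₁ Γ) (s, t) :=
  pderivSnd_pderivFst_eq_of_eqOn (hΓ.of_le (by norm_cast)) hΩ hst hgeo <|
    (((hf.differentiable (by simp) s).hasDerivAt.ofReal_comp).const_mul I).mul
      ((hΓ.pderivFst hΩ (m := ∞) (by simp)).differentiableAt_of_isOpen hΩ (by simp)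
        hst).hasDerivAt_pderivFst

theorem pderivSnd_pderivFst_pderivFst_of_geodesic (hΩ : IsOpen Ω) (hΓ : ContDiffOn ℝ ∞ Γ Ω)
    (hf : ContDiff ℝ ∞ f) (hgeo : EqOn (∂₂ Γ) (fun p => I * f p.1 * ∂₁ Γ p) Ω)
    (hst : (s, t) ∈ Ω) :
    ∂₂ (∂₁ (∂₁ Γ)) (s, t) = I * deriv (deriv f) s * ∂₁ Γ (s, t)
      + I * deriv f s * ∂₁ (∂₁ Γ) (s, t)
      + (I * deriv f s * ∂₁ (∂₁ Γ) (s, t) + I * f s * ∂₁ (∂₁ (∂₁ Γ)) (s, t)) := by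
  have hV : ContDiffOn ℝ ∞ (∂₁ Γ) Ω := hΓ.pderivFst hΩ (by simp)
  have hVs : ContDiffOn ℝ ∞ (∂₁ (∂₁ Γ)) Ω := hV.pderivFst hΩ (by simp)
  have hf' : ContDiff ℝ ∞ (deriv f) := hf.iterate_deriv 1
  refine pderivSnd_pderivFst_eq_of_eqOn (hV.of_le (by norm_cast)) hΩ hst
    (fun p hp => pderivSnd_pderivFst_of_geodesic hΩ hΓ hf hgeo hp) ?_
  exact ((((hf'.differentiable (by simp) s).hasDerivAt.ofReal_comp).const_mul I).mul
      (hV.differentiableAt_of_isOpen hΩ (by simp) hst).hasDerivAt_pderivFst).add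
    ((((hf.differentiable (by simp) s).hasDerivAt.ofReal_comp).const_mul I).mul
      (hVs.differentiableAt_of_isOpen hΩ (by simp) hst).hasDerivAt_pderivFst)

/-- `⟪∂₁Γ, I * ∂₁(∂₁Γ)⟫ / ‖∂₁Γ‖³` is minus the curvature of the curve `Γ(·, t)`. -/
theorem pderivSnd_norm_pderivFst_of_geodesic (hΩ : IsOpen Ω) (hΓ : ContDiffOn ℝ ∞ Γ Ω)
    (hf : ContDiff ℝ ∞ f) (hgeo : EqOn (∂₂ Γ) (fun p => I * f p.1 * ∂₁ Γ p) Ω)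
    (hst : (s, t) ∈ Ω) (h0 : ∂₁ Γ (s, t) ≠ 0) :
    ∂₂ (fun p => ‖∂₁ Γ p‖) (s, t)
      = f s * ⟪∂₁ Γ (s, t), I * ∂₁ (∂₁ Γ) (s, t)⟫ / ‖∂₁ Γ (s, t)‖ := by
  have hV : DifferentiableAt ℝ (∂₁ Γ) (s, t) :=
    (hΓ.pderivFst hΩ (m := ∞) (by simp)).differentiableAt_of_isOpen hΩ (by simp) hst
  rw [(hV.norm ℝ h0).hasDerivAt_pderivSnd.unique (hV.hasDerivAt_pderivSnd.norm h0),
    pderivSnd_pderivFst_of_geodesic hΩ hΓ hf hgeo hst]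
  congr 1
  simp only [Complex.inner, mul_re, mul_im, add_re, add_im, I_re, I_im, ofReal_re, ofReal_im,
    conj_re, conj_im]
  ring

theorem pderivSnd_pderivSnd_norm_pderivFst_of_geodesic (hΩ : IsOpen Ω)
    (hΓ : ContDiffOn ℝ ∞ Γ Ω) (hf : ContDiff ℝ ∞ f)
    (hgeo : EqOn (∂₂ Γ) (fun p => I * f p.1 * ∂₁ Γ p) Ω) (h0 : ∀ p ∈ Ω, ∂₁ Γ p ≠ 0)
    (hst : (s, t) ∈ Ω) {k k' : ℝ} (hunit : ‖∂₁ Γ (s, t)‖ = 1)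
    (hVs : ∂₁ (∂₁ Γ) (s, t) = I * k * ∂₁ Γ (s, t))
    (hVss : ∂₁ (∂₁ (∂₁ Γ)) (s, t) = (I * k' - k ^ 2) * ∂₁ Γ (s, t)) :
    ∂₂ (∂₂ (fun p => ‖∂₁ Γ p‖)) (s, t) = f s ^ 2 * k ^ 2 - f s * deriv (deriv f) s := by
  have hV : ContDiffOn ℝ ∞ (∂₁ Γ) Ω := hΓ.pderivFst hΩ (by simp)
  have hVd := hV.differentiableAt_of_isOpen hΩ (by simp) hst
  have hVsd := (hV.pderivFst hΩ (m := ∞) (by simp)).differentiableAt_of_isOpen hΩ (by simp) hst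
  have hR : ContDiffOn ℝ ∞ (fun p => ‖∂₁ Γ p‖) Ω := hV.norm ℝ h0
  have hslice := ((hVd.hasDerivAt_pderivSnd.inner ℝ
    (hVsd.hasDerivAt_pderivSnd.const_mul I)).const_mul (f s)).div
    (hVd.hasDerivAt_pderivSnd.norm (h0 _ hst)) (norm_ne_zero_iff.2 (h0 _ hst))
  rw [pderivSnd_eq_of_eqOn ((hR.pderivSnd hΩ (m := ∞) (by simp)).differentiableAt_of_isOpen hΩ
    (by simp) hst) hΩ hst (fun p hp => pderivSnd_norm_pderivFst_of_geodesic hΩ hΓ hf hgeo hp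
      (h0 p hp)) hslice, pderivSnd_pderivFst_of_geodesic hΩ hΓ hf hgeo hst,
    pderivSnd_pderivFst_pderivFst_of_geodesic hΩ hΓ hf hgeo hst, hVss, hVs, hunit]
  set c := ∂₁ Γ (s, t)
  have hc : c.re * c.re + c.im * c.im = 1 := by
    rw [← normSq_apply, normSq_eq_norm_sq, hunit, one_pow]
  simp only [Complex.inner, mul_re, mul_im, add_re, add_im, sub_re, sub_im, I_re, I_im, ofReal_re,
    ofReal_im, conj_re, conj_im, pow_two]
  linear_combination
    (-(f s * deriv (deriv f) s) - f s ^ 2 * k ^ 2 * (c.re * c.re + c.im * c.im - 1)) * hc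

end GeodesicFamily

theorem second_variation_of_length_general
    (ε : ℝ) (hε : 0 < ε)
    (f : ℝ → ℝ) (hf : ContDiff ℝ (⊤ : ℕ∞) f)
    (hfper : ∀ s : ℝ, f (s + 2 * π) = f s)
    (γ : ℝ → ℝ → ℂ)
    (hγ : ContDiffOn ℝ (⊤ : ℕ∞) (fun p : ℝ × ℝ => γ p.1 p.2)
      (Set.univ ×ˢ Set.Ioo (-ε) ε))
    (hgeo : ∀ s : ℝ, ∀ t ∈ Set.Ioo (-ε) ε,
      deriv (fun t' => γ s t') t = Complex.I * (f s : ℂ) * deriv (fun s' => γ s' t) s)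
    (himm : ∀ s : ℝ, ∀ t ∈ Set.Ioo (-ε) ε, deriv (fun s' => γ s' t) s ≠ 0)
    (harc : ∀ s : ℝ, ‖deriv (fun s' => γ s' 0) s‖ = 1)
    (κ : ℝ → ℝ) (hκ : ContDiff ℝ (⊤ : ℕ∞) κ)
    (hcurv : ∀ s : ℝ, deriv (fun s' => deriv (fun s'' => γ s'' 0) s') s
      = Complex.I * (κ s : ℂ) * deriv (fun s' => γ s' 0) s) :
    let lam : ℝ → ℝ := fun t =>
      ∫ s in (0:ℝ)..(2 * π), ‖deriv (fun s' => γ s' t) s‖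
    DifferentiableAt ℝ lam 0 ∧ DifferentiableAt ℝ (deriv lam) 0 ∧
    deriv (deriv lam) 0 = ∫ s in (0:ℝ)..(2 * π), ((deriv f s) ^ 2 + (f s) ^ 2 * (κ s) ^ 2) ∧
    0 ≤ ∫ s in (0:ℝ)..(2 * π), ((deriv f s) ^ 2 + (f s) ^ 2 * (κ s) ^ 2) := by
  intro lam
  set Γ : ℝ × ℝ → ℂ := fun p => γ p.1 p.2
  set Ω : Set (ℝ × ℝ) := univ ×ˢ Ioo (-ε) ε
  have hΩ : IsOpen Ω := isOpen_univ.prod isOpen_Ioo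
  have h0 : (0 : ℝ) ∈ Ioo (-ε) ε := ⟨neg_lt_zero.2 hε, hε⟩
  have hΓd : ∀ s, ∀ t ∈ Ioo (-ε) ε, DifferentiableAt ℝ Γ (s, t) := fun s t ht =>
    hγ.differentiableAt_of_isOpen hΩ (by simp) ⟨trivial, ht⟩
  have hV : ∀ s, ∀ t ∈ Ioo (-ε) ε, deriv (fun s' => γ s' t) s = ∂₁ Γ (s, t) := fun s t ht =>
    (hΓd s t ht).hasDerivAt_pderivFst.deriv
  have hgeo' : EqOn (∂₂ Γ) (fun p => Complex.I * f p.1 * ∂₁ Γ p) Ω := by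
    rintro ⟨s, t⟩ ⟨-, ht⟩
    beta_reduce
    rw [← hV s t ht, ← hgeo s t ht, (hΓd s t ht).hasDerivAt_pderivSnd.deriv]
  have himm' : ∀ p ∈ Ω, ∂₁ Γ p ≠ 0 := by
    rintro ⟨s, t⟩ ⟨-, ht⟩
    exact hV s t ht ▸ himm s t ht
  have hV₁ : ContDiffOn ℝ ∞ (∂₁ Γ) Ω := hγ.pderivFst hΩ (by simp)
  have hV₁d : ∀ s, DifferentiableAt ℝ (∂₁ Γ) (s, 0) := fun s =>
    hV₁.differentiableAt_of_isOpen hΩ (by simp) ⟨trivial, h0⟩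
  have hV₂d : ∀ s, DifferentiableAt ℝ (∂₁ (∂₁ Γ)) (s, 0) := fun s =>
    (hV₁.pderivFst hΩ (m := ∞) (by simp)).differentiableAt_of_isOpen hΩ (by simp) ⟨trivial, h0⟩
  have hVs : ∀ s, ∂₁ (∂₁ Γ) (s, 0) = Complex.I * κ s * ∂₁ Γ (s, 0) := fun s => by
    rw [← hV s 0 h0, ← hcurv s, ← (hV₁d s).hasDerivAt_pderivFst.deriv]
    exact congrArg (deriv · s) (funext fun s' => (hV s' 0 h0).symm)
  have hlam : lam =ᶠ[𝓝 0] fun t => ∫ s in (0 : ℝ)..(2 * π), ‖∂₁ Γ (s, t)‖ := by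
    filter_upwards [isOpen_Ioo.mem_nhds h0] with t ht
    exact intervalIntegral.integral_congr fun s _ => by simp only [hV s t ht]
  obtain ⟨hd1, hd2⟩ := hasDerivAt_deriv_intervalIntegral isOpen_Ioo
    ((hV₁.norm ℝ himm').of_le (by norm_cast)) 0 (2 * π) h0
  have hval : ∀ s, ∂₂ (∂₂ (fun p => ‖∂₁ Γ p‖)) (s, 0)
      = f s ^ 2 * κ s ^ 2 - f s * deriv (deriv f) s := fun s =>
    pderivSnd_pderivSnd_norm_pderivFst_of_geodesic hΩ hγ hf hgeo' himm' ⟨trivial, h0⟩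
      (by rw [← hV s 0 h0, harc]) (hVs s)
      (pderivFst_pderivFst_of_curvature (hV₁d s) (hV₂d s) (hκ.differentiable (by simp) s) hVs)
  refine ⟨hd1.congr_of_eventuallyEq hlam, hd2.differentiableAt.congr_of_eventuallyEq hlam.deriv,
    ?_, intervalIntegral.integral_nonneg two_pi_pos.le fun s _ => by positivity⟩
  rw [hlam.deriv.deriv_eq, hd2.deriv, intervalIntegral.integral_congr fun s _ => hval s]
  exact intervalIntegral_sq_mul_sq_sub_mul_deriv_deriv_of_periodic (hf.of_le (by norm_cast))
    hfper hκ.continuous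

/-- Second variation of the length functional along a geodesic family of closed plane
curves: λ″(0) = ∫₀^{2π} (f′)² + f²κ² ds ≥ 0. -/
theorem second_variation_of_length
    (ε : ℝ) (hε : 0 < ε)
    (f : ℝ → ℝ) (hf : ContDiff ℝ (⊤ : ℕ∞) f)
    (hfper : ∀ s : ℝ, f (s + 2 * π) = f s)
    (γ : ℝ → ℝ → ℂ)
    (hγ : ContDiffOn ℝ (⊤ : ℕ∞) (fun p : ℝ × ℝ => γ p.1 p.2)
      (Set.univ ×ˢ Set.Ioo (-ε) ε))
    (hγper : ∀ s : ℝ, ∀ t ∈ Set.Ioo (-ε) ε, γ (s + 2 * π) t = γ s t)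
    (hgeo : ∀ s : ℝ, ∀ t ∈ Set.Ioo (-ε) ε,
      deriv (fun t' => γ s t') t = Complex.I * (f s : ℂ) * deriv (fun s' => γ s' t) s)
    (himm : ∀ s : ℝ, ∀ t ∈ Set.Ioo (-ε) ε, deriv (fun s' => γ s' t) s ≠ 0)
    (harc : ∀ s : ℝ, ‖deriv (fun s' => γ s' 0) s‖ = 1)
    (κ : ℝ → ℝ) (hκ : ContDiff ℝ (⊤ : ℕ∞) κ)
    (hcurv : ∀ s : ℝ, deriv (fun s' => deriv (fun s'' => γ s'' 0) s') s
      = Complex.I * (κ s : ℂ) * deriv (fun s' => γ s' 0) s) :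
    let lam : ℝ → ℝ := fun t =>
      ∫ s in (0:ℝ)..(2 * π), ‖deriv (fun s' => γ s' t) s‖
    DifferentiableAt ℝ lam 0 ∧ DifferentiableAt ℝ (deriv lam) 0 ∧
    deriv (deriv lam) 0 = ∫ s in (0:ℝ)..(2 * π), ((deriv f s) ^ 2 + (f s) ^ 2 * (κ s) ^ 2) ∧
    0 ≤ ∫ s in (0:ℝ)..(2 * π), ((deriv f s) ^ 2 + (f s) ^ 2 * (κ s) ^ 2) :=
  second_variation_of_length_general ε hε f hf hfper γ hγ hgeo himm harc κ hκ hcurv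
end

section
/- Let V be a complex inner product space with Hermitian inner product ⟨·,·⟩, and let ⟨·,·⟩_ℝ = Re⟨·,·⟩ be the associated real inner product. Let n ≥ 1 and let e : Fin n → V be an orthonormal family with respect to ⟨·,·⟩_ℝ. Let G be the real Gram matrix (of size 2n × 2n, with respect to ⟨·,·⟩_ℝ) of the 2n vectors e₁, …, eₙ, i·e₁, …, i·eₙ. Then det G ≤ 1, with equality if and only if Im⟨eⱼ, eₖ⟩ = 0 for all j, k (i.e. the real span of e₁, …, eₙ is Lagrangian for the Kähler form ω(u,v) = Re⟨i·u, v⟩). -/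
/-!
Since `Re⟨i·x, i·y⟩ = Re⟨x, y⟩` and `Re⟨x, i·y⟩ = -Im⟨x, y⟩`, the real Gram matrix of
`e, i·e` is `[[1, -A], [A, 1]]` with `A = (Im⟨eⱼ, eₖ⟩)`. Being a Gram matrix with unit diagonal,
it is positive semidefinite with trace `2n`, so by AM–GM the product of its eigenvalues, the
determinant, is at most `1`, with equality only if every eigenvalue is `1`, i.e. only if the
matrix is the identity, i.e. `A = 0`.
-/

open scoped ComplexOrder

namespace Real

variable {ι : Type*} [Fintype ι] {x : ι → ℝ}

lemma prod_exp_sub_one_eq_one (hsum : ∑ i, x i = Fintype.card ι) :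
    ∏ i, exp (x i - 1) = 1 := by
  simp [← exp_sum, Finset.sum_sub_distrib, hsum]

lemma le_exp_sub_one (t : ℝ) : t ≤ exp (t - 1) := by
  linarith [add_one_le_exp (t - 1)]

lemma prod_le_one_of_sum_eq_card (hx : ∀ i, 0 ≤ x i) (hsum : ∑ i, x i = Fintype.card ι) :
    ∏ i, x i ≤ 1 :=
  prod_exp_sub_one_eq_one hsum ▸
    Finset.prod_le_prod (fun i _ ↦ hx i) (fun i _ ↦ le_exp_sub_one (x i))

lemma eq_one_of_prod_eq_one_of_sum_eq_card (hx : ∀ i, 0 ≤ x i)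
    (hsum : ∑ i, x i = Fintype.card ι) (hprod : ∏ i, x i = 1) (i : ι) : x i = 1 := by
  by_contra hne
  have hpos : ∀ j, 0 < x j := fun j ↦
    (hx j).lt_of_ne fun h ↦ by simp [Finset.prod_eq_zero (Finset.mem_univ j) h.symm] at hprod
  have hlt : x i < exp (x i - 1) := by
    linarith [add_one_lt_exp (x := x i - 1) (by intro h; apply hne; linarith)]
  have := Finset.prod_lt_prod (fun j _ ↦ hpos j) (fun j _ ↦ le_exp_sub_one (x j))
    ⟨i, Finset.mem_univ i, hlt⟩
  rw [hprod, prod_exp_sub_one_eq_one hsum] at this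
  exact this.false

end Real

namespace Matrix

section UnitDiagonal

variable {𝕜 n : Type*} [RCLike 𝕜] [Fintype n] [DecidableEq n] {A : Matrix n n 𝕜}

lemma PosSemidef.sum_eigenvalues_eq_card_of_diag_eq_one (hA : A.PosSemidef)
    (hdiag : ∀ i, A i i = 1) : ∑ i, hA.1.eigenvalues i = Fintype.card n := by
  have := hA.1.trace_eq_sum_eigenvalues
  simp only [trace, diag, hdiag, Finset.sum_const, Finset.card_univ, nsmul_eq_mul, mul_one] at this
  exact_mod_cast this.symm

lemma PosSemidef.det_le_one_of_diag_eq_one (hA : A.PosSemidef) (hdiag : ∀ i, A i i = 1) :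
    A.det ≤ 1 := by
  rw [hA.1.det_eq_prod_eigenvalues, ← RCLike.ofReal_prod, ← RCLike.ofReal_one,
    RCLike.ofReal_le_ofReal]
  exact Real.prod_le_one_of_sum_eq_card hA.eigenvalues_nonneg
    (hA.sum_eigenvalues_eq_card_of_diag_eq_one hdiag)

lemma PosSemidef.det_eq_one_iff_of_diag_eq_one (hA : A.PosSemidef) (hdiag : ∀ i, A i i = 1) :
    A.det = 1 ↔ A = 1 := by
  refine ⟨fun hdet ↦ ?_, fun h ↦ h ▸ det_one⟩
  rw [hA.1.det_eq_prod_eigenvalues, ← RCLike.ofReal_prod, ← RCLike.ofReal_one,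
    RCLike.ofReal_inj] at hdet
  have hone : hA.1.eigenvalues = 1 := funext <| Real.eq_one_of_prod_eq_one_of_sum_eq_card
    hA.eigenvalues_nonneg (hA.sum_eigenvalues_eq_card_of_diag_eq_one hdiag) hdet
  rw [hA.1.spectral_theorem, hone]
  simp

end UnitDiagonal

section Gram

variable {E n : Type*}

lemma posSemidef_map_re_gram (𝕜 : Type*) [RCLike 𝕜] [SeminormedAddCommGroup E]
    [InnerProductSpace 𝕜 E] [Finite n] (v : n → E) : ((gram 𝕜 v).map RCLike.re).PosSemidef :=
  letI := InnerProductSpace.rclikeToReal 𝕜 E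
  posSemidef_gram ℝ v

lemma map_re_gram_sumElim_I_smul [SeminormedAddCommGroup E] [InnerProductSpace ℂ E]
    (e : n → E) :
    (gram ℂ (Sum.elim e fun j ↦ Complex.I • e j)).map Complex.re =
      fromBlocks ((gram ℂ e).map Complex.re) (-(gram ℂ e).map Complex.im)
        ((gram ℂ e).map Complex.im) ((gram ℂ e).map Complex.re) := by
  ext (j | j) (k | k) <;> simp [inner_smul_left, inner_smul_right]

end Gram

end Matrix

theorem gram_det_le_one_iff_lagrangian_general
    (V : Type*) [NormedAddCommGroup V] [InnerProductSpace ℂ V]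
    (n : ℕ)
    (e : Fin n → V)
    (he : ∀ j k : Fin n, (inner ℂ (e j) (e k) : ℂ).re = if j = k then 1 else 0) :
    let v : Fin n ⊕ Fin n → V := Sum.elim e (fun j => Complex.I • e j)
    let G : Matrix (Fin n ⊕ Fin n) (Fin n ⊕ Fin n) ℝ :=
      Matrix.of fun j k => (inner ℂ (v j) (v k) : ℂ).re
    G.det ≤ 1 ∧ (G.det = 1 ↔ ∀ j k : Fin n, (inner ℂ (e j) (e k) : ℂ).im = 0) := by
  intro v G
  have hre : (Matrix.gram ℂ e).map Complex.re = 1 := by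
    ext j k
    simp [he, Matrix.one_apply]
  have hG : G = Matrix.fromBlocks 1 (-(Matrix.gram ℂ e).map Complex.im)
      ((Matrix.gram ℂ e).map Complex.im) 1 := by
    rw [← hre, ← Matrix.map_re_gram_sumElim_I_smul]
    rfl
  have hpsd : G.PosSemidef := Matrix.posSemidef_map_re_gram ℂ v
  have hdiag : ∀ i, G i i = 1 := by
    rw [hG]
    rintro (i | i) <;> simp
  refine ⟨hpsd.det_le_one_of_diag_eq_one hdiag, ?_⟩
  rw [hpsd.det_eq_one_iff_of_diag_eq_one hdiag, hG, ← Matrix.fromBlocks_one,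
    Matrix.fromBlocks_inj]
  simp [← Matrix.ext_iff]

/-- For a family e₁,…,eₙ orthonormal with respect to the real inner product Re⟨·,·⟩ on a
complex inner product space, the real Gram determinant of e₁,…,eₙ,i·e₁,…,i·eₙ is at most 1,
with equality iff the real span of the eⱼ is Lagrangian (Im⟨eⱼ,eₖ⟩ = 0 for all j,k). -/
theorem gram_det_le_one_iff_lagrangian
    (V : Type*) [NormedAddCommGroup V] [InnerProductSpace ℂ V]
    (n : ℕ) (hn : 1 ≤ n)
    (e : Fin n → V)
    (he : ∀ j k : Fin n, (inner ℂ (e j) (e k) : ℂ).re = if j = k then 1 else 0) :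
    let v : Fin n ⊕ Fin n → V := Sum.elim e (fun j => Complex.I • e j)
    let G : Matrix (Fin n ⊕ Fin n) (Fin n ⊕ Fin n) ℝ :=
      Matrix.of fun j k => (inner ℂ (v j) (v k) : ℂ).re
    G.det ≤ 1 ∧ (G.det = 1 ↔ ∀ j k : Fin n, (inner ℂ (e j) (e k) : ℂ).im = 0) :=
  gram_det_le_one_iff_lagrangian_general V n e he
end

section
/- Periodicity of integral curves of a positive periodic vector field on the circle: let f : ℝ → ℝ be smooth, 2π-periodic and everywhere positive, and set R = (1/2π) ∫₀^{2π} dθ / f(θ). Then there exists a smooth function θ : ℝ → ℝ such that θ′(s) = f(θ(s)) for all s ∈ ℝ, θ(0) = 0, and θ(s + 2πR) = θ(s) + 2π for all s ∈ ℝ. In particular θ descends to an orientation-preserving diffeomorphism from ℝ/2πRℤ to ℝ/2πℤ. -/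
/-!
The integral curve is the inverse of the time function `G x = ∫₀ˣ dt / f t`. Since `G' = 1 / f`
is positive, smooth and `2π`-periodic, `G` is a smooth increasing homeomorphism of `ℝ` with
nonvanishing derivative satisfying `G (x + 2π) = G x + 2πR`; its inverse then solves
`θ' = 1 / G'(θ) = f ∘ θ` and conjugates translation by `2πR` to translation by `2π`.
-/

open Real Function intervalIntegral

section Primitive

variable {E : Type*} [NormedAddCommGroup E] [NormedSpace ℝ E] [CompleteSpace E] {g : ℝ → E}

theorem hasDerivAt_integral_of_continuous (hg : Continuous g) (a x : ℝ) :
    HasDerivAt (fun u => ∫ t in a..u, g t) (g x) x :=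
  integral_hasDerivAt_right (hg.intervalIntegrable _ _)
    hg.aestronglyMeasurable.stronglyMeasurableAtFilter hg.continuousAt

theorem contDiff_integral_of_contDiff {n : ℕ∞} (hg : ContDiff ℝ n g) (a : ℝ) :
    ContDiff ℝ (n + 1) (fun u => ∫ t in a..u, g t) := by
  have hderiv := hasDerivAt_integral_of_continuous hg.continuous a
  refine contDiff_succ_iff_deriv.2 ⟨fun x => (hderiv x).differentiableAt, by simp, ?_⟩
  rwa [funext fun x => (hderiv x).deriv]

end Primitive

section PositiveIntegrand

variable {g : ℝ → ℝ} {T : ℝ}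

theorem strictMono_integral_of_pos (hc : Continuous g) (hpos : ∀ x, 0 < g x) :
    StrictMono fun u => ∫ t in 0..u, g t :=
  strictMono_of_hasDerivAt_pos (hasDerivAt_integral_of_continuous hc 0) hpos

namespace Function.Periodic

theorem semiconj_integral_add_period (hg : Periodic g T) (hc : Continuous g) :
    Semiconj (fun u => ∫ t in 0..u, g t) (· + T) (· + ∫ t in 0..T, g t) := fun x => by
  simpa using hg.intervalIntegral_add_eq_add 0 x fun a b => hc.intervalIntegrable a b

theorem surjective_integral_of_pos (hg : Periodic g T) (hc : Continuous g)
    (hpos : ∀ x, 0 < g x) (hT : 0 < T) : Surjective fun u => ∫ t in 0..u, g t :=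
  (continuous_primitive (fun a b => hc.intervalIntegrable a b) 0).surjective
    (hg.tendsto_atTop_intervalIntegral_of_pos' (hc.intervalIntegrable 0 T) hpos hT)
    (hg.tendsto_atBot_intervalIntegral_of_pos' (hc.intervalIntegrable 0 T) hpos hT)

noncomputable def integralHomeomorph (hg : Periodic g T) (hc : Continuous g)
    (hpos : ∀ x, 0 < g x) (hT : 0 < T) : ℝ ≃ₜ ℝ :=
  (StrictMono.orderIsoOfSurjective _ (strictMono_integral_of_pos hc hpos)
    (hg.surjective_integral_of_pos hc hpos hT)).toHomeomorph

theorem coe_integralHomeomorph (hg : Periodic g T) (hc : Continuous g) (hpos : ∀ x, 0 < g x)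
    (hT : 0 < T) : ⇑(hg.integralHomeomorph hc hpos hT) = fun u => ∫ t in 0..u, g t :=
  rfl

end Function.Periodic

end PositiveIntegrand

/-- Periodicity of integral curves of a positive 2π-periodic vector field f∂θ on the
circle: with R = (1/2π)∫₀^{2π} dθ/f(θ), there is a smooth integral curve θ of f with
θ(0) = 0 and θ(s + 2πR) = θ(s) + 2π for all s. -/
theorem integral_curve_of_positive_periodic_field_is_periodic
    (f : ℝ → ℝ) (hf : ContDiff ℝ (⊤ : ℕ∞) f)
    (hper : ∀ θ : ℝ, f (θ + 2 * π) = f θ)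
    (hpos : ∀ θ : ℝ, 0 < f θ)
    (R : ℝ)
    (hR : R = (2 * π)⁻¹ * ∫ θ in (0:ℝ)..(2 * π), 1 / f θ) :
    ∃ θ : ℝ → ℝ, ContDiff ℝ (⊤ : ℕ∞) θ ∧
      (∀ s : ℝ, deriv θ s = f (θ s)) ∧
      θ 0 = 0 ∧
      (∀ s : ℝ, θ (s + 2 * π * R) = θ s + 2 * π) := by
  have hrecip_smooth : ContDiff ℝ (⊤ : ℕ∞) fun t => 1 / f t :=
    contDiff_const.div hf fun t => (hpos t).ne'
  have hrecip_per : Periodic (fun t => 1 / f t) (2 * π) := fun t => by simp only [hper]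
  have hrecip_pos : ∀ t, 0 < 1 / f t := fun t => one_div_pos.2 (hpos t)
  have hperiod : 2 * π * R = ∫ t in 0..2 * π, 1 / f t := by
    rw [hR, ← mul_assoc, mul_inv_cancel₀ two_pi_pos.ne', one_mul]
  set G := hrecip_per.integralHomeomorph hrecip_smooth.continuous hrecip_pos two_pi_pos
  have hG : ∀ x, HasDerivAt G (1 / f x) x := by
    simpa only [G, Periodic.coe_integralHomeomorph]
      using hasDerivAt_integral_of_continuous hrecip_smooth.continuous 0
  refine ⟨G.symm, ?_, fun s => ?_, ?_, fun s => ?_⟩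
  · refine G.contDiff_symm_deriv (fun x => (hrecip_pos x).ne') hG ?_
    rw [Periodic.coe_integralHomeomorph]
    exact (contDiff_integral_of_contDiff hrecip_smooth 0).of_le le_self_add
  · simpa using ((G.toOpenPartialHomeomorph.hasDerivAt_symm (Set.mem_univ s)
      (hrecip_pos _).ne' (hG _)).deriv)
  · exact G.symm_apply_eq.2 integral_same.symm
  · rw [hperiod]
    exact (hrecip_per.semiconj_integral_add_period hrecip_smooth.continuous).inverse_left
      G.symm_apply_apply G.apply_symm_apply s
end

section
/- Reduction of the geodesic equation for plane curves to the Cauchy–Riemann equation: let f : ℝ → ℝ be smooth, 2π-periodic and everywhere positive, and let θ : ℝ → ℝ be smooth with θ′(s) = f(θ(s)) for all s. Let ε > 0 and let ι : ℝ × (−ε, ε) → ℂ be smooth and satisfy the geodesic family equation ∂ι/∂t(x, t) = i f(x) ∂ι/∂x(x, t) for all (x, t). Then the map u(s, t) := ι(θ(s), t) satisfies the Cauchy–Riemann equation ∂u/∂t(s,t) = i ∂u/∂s(s,t) for all (s,t); consequently the map w = s + it ↦ u(s,t), defined on the strip {w ∈ ℂ : |Im w| < ε}, is holomorphic. -/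
open Real

/-!
Along the characteristic `θ` of the vector field `f ∂ₓ` one has `∂ₛ u = f(θ s) ∂ₓ ι` by the chain
rule, so the geodesic family equation `∂ₜ ι = i f ∂ₓ ι` becomes `∂ₜ u = i ∂ₛ u`. Since `u` is
real-differentiable on the strip, this Cauchy–Riemann equation makes `w ↦ u (Re w, Im w)`
complex-differentiable there.
-/

open Complex

section PartialDerivatives

variable {E : Type*} [NormedAddCommGroup E] [NormedSpace ℝ E] {v : ℝ × ℝ → E} {p : ℝ × ℝ}

theorem DifferentiableAt.fderiv_apply_one_zero (h : DifferentiableAt ℝ v p) :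
    fderiv ℝ v p (1, 0) = deriv (fun s => v (s, p.2)) p.1 :=
  (h.hasFDerivAt.comp_hasDerivAt p.1 ((hasDerivAt_id _).prodMk (hasDerivAt_const _ _))).deriv.symm

theorem DifferentiableAt.fderiv_apply_zero_one (h : DifferentiableAt ℝ v p) :
    fderiv ℝ v p (0, 1) = deriv (fun t => v (p.1, t)) p.2 :=
  (h.hasFDerivAt.comp_hasDerivAt p.2 ((hasDerivAt_const _ _).prodMk (hasDerivAt_id _))).deriv.symm

end PartialDerivatives

theorem differentiableAt_complex_of_cauchyRiemann {E : Type*} [NormedAddCommGroup E]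
    [NormedSpace ℂ E] {v : ℝ × ℝ → E} {w : ℂ} (hv : DifferentiableAt ℝ v (w.re, w.im))
    (hCR : deriv (fun t => v (w.re, t)) w.im = I • deriv (fun s => v (s, w.im)) w.re) :
    DifferentiableAt ℂ (fun z : ℂ => v (z.re, z.im)) w := by
  have hcomp : HasFDerivAt (fun z : ℂ => v (z.re, z.im))
      ((fderiv ℝ v (w.re, w.im)).comp (equivRealProdCLM : ℂ →L[ℝ] ℝ × ℝ)) w :=
    hv.hasFDerivAt.comp w equivRealProdCLM.hasFDerivAt
  refine differentiableAt_complex_iff_differentiableAt_real.2 ⟨hcomp.differentiableAt, ?_⟩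
  simpa [hcomp.fderiv, hv.fderiv_apply_one_zero, hv.fderiv_apply_zero_one] using hCR

theorem cauchyRiemann_of_geodesic_equation {f θ : ℝ → ℝ} {ι : ℝ → ℝ → ℂ} {s t : ℝ}
    (hθ : HasDerivAt θ (f (θ s)) s) (hι : DifferentiableAt ℝ (fun x => ι x t) (θ s))
    (hgeo : deriv (fun t' => ι (θ s) t') t = I * f (θ s) * deriv (fun x => ι x t) (θ s)) :
    deriv (fun t' => ι (θ s) t') t = I * deriv (fun s' => ι (θ s') t) s := by
  have hchain : HasDerivAt (fun s' => ι (θ s') t) (f (θ s) • deriv (fun x => ι x t) (θ s)) s :=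
    hι.hasDerivAt.scomp s hθ
  rw [hgeo, hchain.deriv, real_smul, mul_assoc]

theorem geodesic_equation_reduces_to_cauchy_riemann_general
    (f : ℝ → ℝ)
    (θ : ℝ → ℝ) (hθ : ContDiff ℝ (⊤ : ℕ∞) θ)
    (hθ' : ∀ s : ℝ, deriv θ s = f (θ s))
    (ε : ℝ)
    (ι : ℝ → ℝ → ℂ)
    (hι : ContDiffOn ℝ (⊤ : ℕ∞) (fun p : ℝ × ℝ => ι p.1 p.2)
      (Set.univ ×ˢ Set.Ioo (-ε) ε))
    (hgeo : ∀ x : ℝ, ∀ t ∈ Set.Ioo (-ε) ε,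
      deriv (fun t' => ι x t') t = Complex.I * (f x : ℂ) * deriv (fun x' => ι x' t) x) :
    (∀ s : ℝ, ∀ t ∈ Set.Ioo (-ε) ε,
      deriv (fun t' => ι (θ s) t') t = Complex.I * deriv (fun s' => ι (θ s') t) s) ∧
    (∀ w : ℂ, |w.im| < ε →
      DifferentiableAt ℂ (fun w' : ℂ => ι (θ w'.re) w'.im) w) := by
  have hιd : ∀ x, ∀ t ∈ Set.Ioo (-ε) ε, DifferentiableAt ℝ (fun p : ℝ × ℝ => ι p.1 p.2) (x, t) :=
    fun x t ht => (hι.contDiffAt ((isOpen_univ.prod isOpen_Ioo).mem_nhds ⟨trivial, ht⟩)).differentiableAt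
      (by simp)
  have hθd : ∀ s, HasDerivAt θ (f (θ s)) s := fun s =>
    hθ' s ▸ (hθ.differentiable (by simp) s).hasDerivAt
  have hCR : ∀ s, ∀ t ∈ Set.Ioo (-ε) ε,
      deriv (fun t' => ι (θ s) t') t = Complex.I * deriv (fun s' => ι (θ s') t) s :=
    fun s t ht => cauchyRiemann_of_geodesic_equation (hθd s)
      ((hιd (θ s) t ht).comp (f := fun x => (x, t)) (θ s)
        (differentiableAt_id.prodMk (differentiableAt_const t)))
      (hgeo (θ s) t ht)
  refine ⟨hCR, fun w hw => ?_⟩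
  have ht : w.im ∈ Set.Ioo (-ε) ε := abs_lt.mp hw
  refine differentiableAt_complex_of_cauchyRiemann (v := fun p => ι (θ p.1) p.2) ?_
    (hCR w.re w.im ht)
  exact (hιd (θ w.re) w.im ht).comp (f := fun p : ℝ × ℝ => (θ p.1, p.2)) (w.re, w.im)
    (.prodMap _ (hθd w.re).differentiableAt differentiableAt_id)

/-- Reduction of the geodesic equation for plane curves to the Cauchy–Riemann equation:
if ι satisfies ∂ι/∂t = i f ∂ι/∂x and θ′ = f∘θ, then u(s,t) = ι(θ(s),t) satisfies
∂u/∂t = i ∂u/∂s, and hence w = s+it ↦ u(s,t) is holomorphic on the strip |Im w| < ε. -/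
theorem geodesic_equation_reduces_to_cauchy_riemann
    (f : ℝ → ℝ) (hf : ContDiff ℝ (⊤ : ℕ∞) f)
    (hper : ∀ x : ℝ, f (x + 2 * π) = f x)
    (hpos : ∀ x : ℝ, 0 < f x)
    (θ : ℝ → ℝ) (hθ : ContDiff ℝ (⊤ : ℕ∞) θ)
    (hθ' : ∀ s : ℝ, deriv θ s = f (θ s))
    (ε : ℝ) (hε : 0 < ε)
    (ι : ℝ → ℝ → ℂ)
    (hι : ContDiffOn ℝ (⊤ : ℕ∞) (fun p : ℝ × ℝ => ι p.1 p.2)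
      (Set.univ ×ˢ Set.Ioo (-ε) ε))
    (hgeo : ∀ x : ℝ, ∀ t ∈ Set.Ioo (-ε) ε,
      deriv (fun t' => ι x t') t = Complex.I * (f x : ℂ) * deriv (fun x' => ι x' t) x) :
    (∀ s : ℝ, ∀ t ∈ Set.Ioo (-ε) ε,
      deriv (fun t' => ι (θ s) t') t = Complex.I * deriv (fun s' => ι (θ s') t) s) ∧
    (∀ w : ℂ, |w.im| < ε →
      DifferentiableAt ℂ (fun w' : ℂ => ι (θ w'.re) w'.im) w) :=
  geodesic_equation_reduces_to_cauchy_riemann_general f θ hθ hθ' ε ι hι hgeo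
end
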